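/- arXiv:2108.12457 — 8 statements merged into one kernel-verified Lean document; each statement's English description precedes it below -/
import Mathlib

section
/- Let λ be a Young diagram and let A ⊆ λ be a set of cells such that no element of A is weakly northwest of any other element (i.e., for distinct (r,c),(r',c') ∈ A it is not the case that both r' ≤ r and c' ≤ c). Then |A| ≤ sv(λ). -/
open Finset

/-- A Young diagram: a finite set of cells `(r,c)` with `r,c ≥ 1`, closed under
moving weakly north and west (staying in the positive quadrant). -/
def IsYoung (μ : Finset (ℕ × ℕ)) : Prop :=
  ∀ p ∈ μ, 1 ≤ p.1 ∧ 1 ≤ p.2 ∧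
    ∀ r' c' : ℕ, 1 ≤ r' → r' ≤ p.1 → 1 ≤ c' → c' ≤ p.2 → (r', c') ∈ μ

/-- The staircase `δ^k = {(r,c) : r,c ≥ 1, r + c ≤ k + 1}`. -/
def staircase (k : ℕ) : Finset (ℕ × ℕ) :=
  (Finset.Icc 1 k ×ˢ Finset.Icc 1 k).filter (fun p => p.1 + p.2 ≤ k + 1)

/-- `sv μ` is the largest `k` with `staircase k ⊆ μ` (it is `0` for `μ = ∅`). -/
def sv (μ : Finset (ℕ × ℕ)) : ℕ :=
  Nat.findGreatest (fun k => staircase k ⊆ μ) μ.card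

/-- The cells of `A` that are the unique element of `A` weakly northwest of themselves. -/
def NW (A : Finset (ℕ × ℕ)) : Finset (ℕ × ℕ) :=
  A.filter (fun p => ∀ q ∈ A, q.1 ≤ p.1 → q.2 ≤ p.2 → q = p)

/-- The hook of a cell `p` in `μ`. -/
def hook (μ : Finset (ℕ × ℕ)) (p : ℕ × ℕ) : Finset (ℕ × ℕ) :=
  μ.filter (fun q => (q.1 = p.1 ∧ p.2 < q.2) ∨ (q.2 = p.2 ∧ p.1 < q.1))

/-- The maximum of a finite set of naturals (`0` for the empty set). -/
def maxv (s : Finset ℕ) : ℕ := s.sup id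

/-- An `N⟨k⟩`-standard set-valued pre-tableau of shape `μ`. -/
structure IsPreSVT (μ : Finset (ℕ × ℕ)) (N k : ℕ) (S : ℕ × ℕ → Finset ℕ) : Prop where
  support : ∀ p, p ∉ μ → S p = ∅
  subset : ∀ p ∈ μ, S p ⊆ Finset.Icc (k + 1) N
  exactlyOnce : ∀ i ∈ Finset.Icc (k + 1) N, ∃! p, p ∈ μ ∧ i ∈ S p
  down_ne : ∀ r c : ℕ, (r, c) ∈ μ → (r + 1, c) ∈ μ →
    (S (r, c)).Nonempty → (S (r + 1, c)).Nonempty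
  right_ne : ∀ r c : ℕ, (r, c) ∈ μ → (r, c + 1) ∈ μ →
    (S (r, c)).Nonempty → (S (r, c + 1)).Nonempty
  down_lt : ∀ r c : ℕ, (r, c) ∈ μ → (r + 1, c) ∈ μ →
    ∀ a ∈ S (r, c), ∀ b ∈ S (r + 1, c), a < b
  right_lt : ∀ r c : ℕ, (r, c) ∈ μ → (r, c + 1) ∈ μ →
    ∀ a ∈ S (r, c), ∀ b ∈ S (r, c + 1), a < b
  empties : (μ.filter (fun p => S p = ∅)).card ≤ k

/-- An `N`-standard set-valued tableau of shape `μ`: every cell gets a nonempty set,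
each value `1,…,N` appears exactly once, rows and columns are strictly increasing. -/
def IsSVT (μ : Finset (ℕ × ℕ)) (N : ℕ) (T : ℕ × ℕ → Finset ℕ) : Prop :=
  IsPreSVT μ N 0 T

/-- The set of `N`-standard set-valued tableaux of shape `μ` containing `S`. -/
def SVTset (μ : Finset (ℕ × ℕ)) (N : ℕ) (S : ℕ × ℕ → Finset ℕ) :
    Set (ℕ × ℕ → Finset ℕ) :=
  {T | IsSVT μ N T ∧ ∀ p, S p ⊆ T p}

/-- `f^{μ,N,S}`, the number of `N`-standard set-valued tableaux of shape `μ` containing `S`. -/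
noncomputable def fSVT (μ : Finset (ℕ × ℕ)) (N : ℕ) (S : ℕ × ℕ → Finset ℕ) : ℕ :=
  (SVTset μ N S).ncard

/-- `f^{μ,N}`, the number of `N`-standard set-valued tableaux of shape `μ`. -/
noncomputable def fSVTall (μ : Finset (ℕ × ℕ)) (N : ℕ) : ℕ :=
  {T : ℕ × ℕ → Finset ℕ | IsSVT μ N T}.ncard

/-- A standard Young tableau of shape `μ`: a bijection from the cells of `μ`
to `{1,…,|μ|}` increasing along rows and columns (valued `0` off `μ`). -/
structure IsSYT (μ : Finset (ℕ × ℕ)) (F : ℕ × ℕ → ℕ) : Prop where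
  support : ∀ p, p ∉ μ → F p = 0
  mem_range : ∀ p ∈ μ, F p ∈ Finset.Icc 1 μ.card
  exactlyOnce : ∀ i ∈ Finset.Icc 1 μ.card, ∃! p, p ∈ μ ∧ F p = i
  down_lt : ∀ r c : ℕ, (r, c) ∈ μ → (r + 1, c) ∈ μ → F (r, c) < F (r + 1, c)
  right_lt : ∀ r c : ℕ, (r, c) ∈ μ → (r, c + 1) ∈ μ → F (r, c) < F (r, c + 1)

/-- `f^μ`, the number of standard Young tableaux of shape `μ`. -/
noncomputable def fSYT (μ : Finset (ℕ × ℕ)) : ℕ :=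
  {F : ℕ × ℕ → ℕ | IsSYT μ F}.ncard

/-- If `A ⊆ λ` and no element of `A` is weakly northwest of any
other element, then `|A| ≤ sv(λ)`. -/
theorem antichain_card_le_sv (lam A : Finset (ℕ × ℕ)) (hY : IsYoung lam)
    (hAsub : A ⊆ lam)
    (hA : ∀ p ∈ A, ∀ q ∈ A, p ≠ q → ¬(q.1 ≤ p.1 ∧ q.2 ≤ p.2)) :
    A.card ≤ sv lam := by
  set k := A.card with hk
  -- counting lemma: few elements of A have small f-value, for injective coordinate f
  have count : ∀ (f : ℕ × ℕ → ℕ), (∀ p ∈ A, 1 ≤ f p) →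
      (∀ p ∈ A, ∀ q ∈ A, f p = f q → p = q) →
      ∀ m : ℕ, (A.filter (fun p => f p < m)).card ≤ m - 1 := by
    intro f hpos hinj m
    have h : (A.filter (fun p => f p < m)).card ≤ (Finset.Ico 1 m).card := by
      apply Finset.card_le_card_of_injOn f
      · intro p hp
        simp only [Finset.mem_coe, Finset.mem_filter] at hp
        exact Finset.mem_Ico.mpr ⟨hpos p hp.1, hp.2⟩
      · intro p hp q hq h
        exact hinj p (Finset.mem_filter.mp hp).1 q (Finset.mem_filter.mp hq).1 h
    simpa [Nat.card_Ico] using h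
  have inj1 : ∀ p ∈ A, ∀ q ∈ A, p.1 = q.1 → p = q := by
    intro p hp q hq h
    by_contra hne
    rcases le_total p.2 q.2 with h2 | h2
    · exact hA q hq p hp (Ne.symm hne) ⟨h.le, h2⟩
    · exact hA p hp q hq hne ⟨h.ge, h2⟩
  have inj2 : ∀ p ∈ A, ∀ q ∈ A, p.2 = q.2 → p = q := by
    intro p hp q hq h
    by_contra hne
    rcases le_total p.1 q.1 with h1 | h1
    · exact hA q hq p hp (Ne.symm hne) ⟨h1, h.le⟩
    · exact hA p hp q hq hne ⟨h1, h.ge⟩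
  apply Nat.le_findGreatest (Finset.card_le_card hAsub)
  intro x hx
  obtain ⟨r, c⟩ := x
  simp only [staircase, Finset.mem_filter, Finset.mem_product, Finset.mem_Icc] at hx
  obtain ⟨⟨⟨hr1, hrk⟩, ⟨hc1, hck⟩⟩, hsum⟩ := hx
  -- find p ∈ A with r ≤ p.1 and k+1-r ≤ p.2
  have hexists : ∃ p ∈ A, r ≤ p.1 ∧ k + 1 - r ≤ p.2 := by
    by_contra hno
    push_neg at hno
    have hsub : A ⊆ A.filter (fun p => p.1 < r) ∪ A.filter (fun p => p.2 < k + 1 - r) := by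
      intro p hp
      rcases lt_or_ge p.1 r with h | h
      · exact Finset.mem_union_left _ (Finset.mem_filter.mpr ⟨hp, h⟩)
      · exact Finset.mem_union_right _ (Finset.mem_filter.mpr ⟨hp, hno p hp h⟩)
    have h1 := count Prod.fst (fun p hp => (hY p (hAsub hp)).1) inj1 r
    have h2 := count Prod.snd (fun p hp => (hY p (hAsub hp)).2.1) inj2 (k + 1 - r)
    have := (Finset.card_le_card hsub).trans (Finset.card_union_le _ _)
    omega
  obtain ⟨p, hp, hr, hc⟩ := hexists
  obtain ⟨-, -, hclose⟩ := hY p (hAsub hp)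
  exact hclose r c hr1 hr hc1 (by omega)
end

section
/- Let λ be a Young diagram and let A ⊆ λ be nonempty. Then NW(A) is nonempty, no element of NW(A) is weakly northwest of any other element of NW(A), and 1 ≤ |NW(A)| ≤ sv(λ). -/
open Finset

/-- For nonempty `A ⊆ λ`, `NW(A)` is nonempty, is an antichain for
the weak-northwest order, and `1 ≤ |NW(A)| ≤ sv(λ)`. -/
theorem NW_nonempty_antichain_card (lam A : Finset (ℕ × ℕ)) (hY : IsYoung lam)
    (hAsub : A ⊆ lam) (hAne : A.Nonempty) :
    (NW A).Nonempty ∧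
    (∀ p ∈ NW A, ∀ q ∈ NW A, p ≠ q → ¬(q.1 ≤ p.1 ∧ q.2 ≤ p.2)) ∧
    1 ≤ (NW A).card ∧ (NW A).card ≤ sv lam := by
  classical
  have hNWsub : NW A ⊆ A := Finset.filter_subset _ _
  -- nonemptiness via a minimizer of the coordinate sum
  obtain ⟨p, hpA, hpmin⟩ := A.exists_min_image (fun p => p.1 + p.2) hAne
  have hpNW : p ∈ NW A := by
    simp only [NW, Finset.mem_filter]
    refine ⟨hpA, fun q hq h1 h2 => ?_⟩
    have := hpmin q hq
    have hq1 : q.1 = p.1 := by omega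
    have hq2 : q.2 = p.2 := by omega
    exact Prod.ext hq1 hq2
  have hne : (NW A).Nonempty := ⟨p, hpNW⟩
  -- antichain
  have hanti : ∀ p ∈ NW A, ∀ q ∈ NW A, p ≠ q → ¬(q.1 ≤ p.1 ∧ q.2 ≤ p.2) := by
    intro p hp q hq hpq ⟨h1, h2⟩
    simp only [NW, Finset.mem_filter] at hp hq
    exact hpq (hp.2 q hq.1 h1 h2).symm
  -- coordinates positive
  have hcoord : ∀ p ∈ NW A, 1 ≤ p.1 ∧ 1 ≤ p.2 := by
    intro p hp
    exact ⟨(hY p (hAsub (hNWsub hp))).1, (hY p (hAsub (hNWsub hp))).2.1⟩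
  -- injectivity of each coordinate on NW A
  have hinj1 : ∀ p ∈ NW A, ∀ q ∈ NW A, p.1 = q.1 → p = q := by
    intro p hp q hq h
    by_contra hpq
    rcases le_total p.2 q.2 with h2 | h2
    · exact hanti q hq p hp (Ne.symm hpq) ⟨le_of_eq h, h2⟩
    · exact hanti p hp q hq hpq ⟨le_of_eq h.symm, h2⟩
  have hinj2 : ∀ p ∈ NW A, ∀ q ∈ NW A, p.2 = q.2 → p = q := by
    intro p hp q hq h
    by_contra hpq
    rcases le_total p.1 q.1 with h1 | h1
    · exact hanti q hq p hp (Ne.symm hpq) ⟨h1, le_of_eq h⟩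
    · exact hanti p hp q hq hpq ⟨h1, le_of_eq h.symm⟩
  set m := (NW A).card with hm
  -- key: for each 1 ≤ i ≤ m there is p ∈ NW A with i ≤ p.1 and m+1-i ≤ p.2
  have key : ∀ i, 1 ≤ i → i ≤ m → ∃ p ∈ NW A, i ≤ p.1 ∧ m + 1 - i ≤ p.2 := by
    intro i hi1 him
    set B := (NW A).filter (fun p => i ≤ p.1) with hB
    have hBs : B ⊆ NW A := Finset.filter_subset _ _
    have hB'card : ((NW A).filter (fun p => ¬ i ≤ p.1)).card ≤ i - 1 := by
      have : ((NW A).filter (fun p => ¬ i ≤ p.1)).card ≤ (Finset.Icc 1 (i-1)).card := by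
        apply Finset.card_le_card_of_injOn (fun p => p.1)
        · intro q hq
          simp only [Finset.mem_coe, Finset.mem_filter] at hq
          have := hcoord q hq.1
          simp only [Finset.mem_coe, Finset.mem_Icc]
          omega
        · intro a ha b hb hab
          simp only [Finset.mem_coe, Finset.mem_filter] at ha hb
          exact hinj1 a ha.1 b hb.1 hab
      simpa using this
    have hBcard : m + 1 - i ≤ B.card := by
      have hsplit := Finset.card_filter_add_card_filter_not
        (s := NW A) (p := fun p => i ≤ p.1)
      rw [← hB, ← hm] at hsplit
      omega
    have hBne : B.Nonempty := Finset.card_pos.mp (by omega)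
    set C := B.image Prod.snd with hC
    have hCcard : C.card = B.card := Finset.card_image_of_injOn
      (fun a ha b hb hab => hinj2 a (hBs ha) b (hBs hb) hab)
    have hCne : C.Nonempty := hBne.image _
    have hCle : C.card ≤ C.max' hCne := by
      have : C ⊆ Finset.Icc 1 (C.max' hCne) := by
        intro x hx
        simp only [Finset.mem_Icc]
        refine ⟨?_, Finset.le_max' C x hx⟩
        obtain ⟨q, hq, rfl⟩ := Finset.mem_image.mp hx
        exact (hcoord q (hBs hq)).2
      have := Finset.card_le_card this
      simpa using this
    obtain ⟨q, hq, hq2⟩ := Finset.mem_image.mp (C.max'_mem hCne)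
    refine ⟨q, hBs hq, ?_, ?_⟩
    · exact (Finset.mem_filter.mp hq).2
    · omega
  -- staircase m ⊆ lam
  have hstair : staircase m ⊆ lam := by
    intro x hx
    simp only [staircase, Finset.mem_filter, Finset.mem_product, Finset.mem_Icc] at hx
    obtain ⟨⟨⟨hr1, hrm⟩, ⟨hc1, hcm⟩⟩, hsum⟩ := hx
    obtain ⟨q, hq, hq1, hq2⟩ := key x.1 hr1 hrm
    have hqlam : q ∈ lam := hAsub (hNWsub hq)
    have := (hY q hqlam).2.2 x.1 x.2 hr1 hq1 hc1 (by omega)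
    simpa using this
  have hmcard : m ≤ lam.card := Finset.card_le_card (hNWsub.trans hAsub)
  exact ⟨hne, hanti, Finset.card_pos.mpr hne,
    Nat.le_findGreatest hmcard hstair⟩
end

section
/- Let λ be a nonempty Young diagram, let N ≥ |λ|, let 0 ≤ k ≤ N, and let S be an N⟨k⟩-standard set-valued pre-tableau of shape λ. Then there exists an N-standard set-valued tableau T of shape λ with S(r,c) ⊆ T(r,c) for every cell (r,c) ∈ λ; that is, f^{λ,N,S} ≥ 1. -/
open Finset

/-! The values `k, k - 1, …, 1` are inserted one at a time, each into an empty cell maximising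
`r + c`, or into `(1,1)` once no cell is empty. Since nonempty cells propagate south and east,
the cells north and west of an empty cell are empty too, so the new value, smaller than every
value already placed, keeps rows and columns strictly increasing. -/

def IsSuccCell (p q : ℕ × ℕ) : Prop := q = (p.1 + 1, p.2) ∨ q = (p.1, p.2 + 1)

lemma IsSuccCell.ne {p q : ℕ × ℕ} (h : IsSuccCell p q) : p ≠ q := by
  rcases h with rfl | rfl <;> simp [Prod.ext_iff]

lemma IsSuccCell.add_eq {p q : ℕ × ℕ} (h : IsSuccCell p q) : q.1 + q.2 = p.1 + p.2 + 1 := by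
  rcases h with rfl | rfl <;> simp only <;> omega

lemma IsYoung.one_one_mem {μ : Finset (ℕ × ℕ)} (hY : IsYoung μ) (hne : μ.Nonempty) :
    ((1, 1) : ℕ × ℕ) ∈ μ := by
  obtain ⟨p, hp⟩ := hne
  obtain ⟨hp1, hp2, hclosed⟩ := hY p hp
  exact hclosed 1 1 le_rfl hp1 le_rfl hp2

lemma IsYoung.not_isSuccCell_one_one {μ : Finset (ℕ × ℕ)} (hY : IsYoung μ) {q : ℕ × ℕ}
    (hq : q ∈ μ) : ¬ IsSuccCell q (1, 1) := by
  obtain ⟨hq1, hq2, -⟩ := hY q hq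
  rintro (h | h) <;> simp only [Prod.ext_iff] at h <;> omega

section UpdateInsert

variable {α β : Type*} [DecidableEq α] [DecidableEq β] {f : α → Finset β} {p q : α} {a i : β}

lemma mem_update_insert_iff :
    i ∈ Function.update f p (insert a (f p)) q ↔ i ∈ f q ∨ (q = p ∧ i = a) := by
  rcases eq_or_ne q p with rfl | h
  · simp [or_comm]
  · simp [h]

lemma update_insert_nonempty_iff :
    (Function.update f p (insert a (f p)) q).Nonempty ↔ (f q).Nonempty ∨ q = p := by
  rcases eq_or_ne q p with rfl | h
  · simp
  · simp [h]

end UpdateInsert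

namespace IsPreSVT

variable {μ : Finset (ℕ × ℕ)} {N k : ℕ} {S : ℕ × ℕ → Finset ℕ}

lemma lt_of_mem {p : ℕ × ℕ} {i : ℕ} (hS : IsPreSVT μ N k S) (hi : i ∈ S p) : k < i := by
  by_cases hp : p ∈ μ
  · exact (mem_Icc.1 (hS.subset p hp hi)).1
  · simp [hS.support p hp] at hi

lemma nonempty_of_isSuccCell (hS : IsPreSVT μ N k S) {q q' : ℕ × ℕ} (hq : q ∈ μ)
    (hq' : q' ∈ μ) (h : IsSuccCell q q') (hne : (S q).Nonempty) : (S q').Nonempty := by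
  obtain ⟨r, c⟩ := q
  rcases h with rfl | rfl
  · exact hS.down_ne r c hq hq' hne
  · exact hS.right_ne r c hq hq' hne

lemma lt_of_isSuccCell (hS : IsPreSVT μ N k S) {q q' : ℕ × ℕ} (hq : q ∈ μ) (hq' : q' ∈ μ)
    (h : IsSuccCell q q') : ∀ x ∈ S q, ∀ y ∈ S q', x < y := by
  obtain ⟨r, c⟩ := q
  rcases h with rfl | rfl
  · exact hS.down_lt r c hq hq'
  · exact hS.right_lt r c hq hq'

lemma update_insert_nonempty_of_isSuccCell (hS : IsPreSVT μ N k S) {p : ℕ × ℕ} {a : ℕ}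
    (hsucc : ∀ q ∈ μ, IsSuccCell p q → (S q).Nonempty) {q q' : ℕ × ℕ} (hq : q ∈ μ)
    (hq' : q' ∈ μ) (h : IsSuccCell q q') :
    (Function.update S p (insert a (S p)) q).Nonempty →
      (Function.update S p (insert a (S p)) q').Nonempty := by
  simp only [update_insert_nonempty_iff]
  rintro (hne | rfl)
  · exact .inl (hS.nonempty_of_isSuccCell hq hq' h hne)
  · exact .inl (hsucc q' hq' h)

lemma update_insert_lt_of_isSuccCell (hS : IsPreSVT μ N k S) {p : ℕ × ℕ} {a : ℕ} (ha : a ≤ k)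
    (hpred : ∀ q ∈ μ, IsSuccCell q p → S q = ∅) {q q' : ℕ × ℕ} (hq : q ∈ μ) (hq' : q' ∈ μ)
    (h : IsSuccCell q q') :
    ∀ x ∈ Function.update S p (insert a (S p)) q,
      ∀ y ∈ Function.update S p (insert a (S p)) q', x < y := by
  intro x hx y hy
  rw [mem_update_insert_iff] at hx hy
  rcases hy with hy | ⟨rfl, rfl⟩
  · rcases hx with hx | ⟨-, rfl⟩
    · exact hS.lt_of_isSuccCell hq hq' h x hx y hy
    · exact ha.trans_lt (hS.lt_of_mem hy)
  · rcases hx with hx | ⟨rfl, -⟩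
    · simp [hpred q hq h] at hx
    · exact absurd rfl h.ne

theorem update_insert (hS : IsPreSVT μ N (k + 1) S) {p : ℕ × ℕ} (hp : p ∈ μ) (hkN : k + 1 ≤ N)
    (hpred : ∀ q ∈ μ, IsSuccCell q p → S q = ∅)
    (hsucc : ∀ q ∈ μ, IsSuccCell p q → (S q).Nonempty)
    (hempty : S p = ∅ ∨ ∀ q ∈ μ, (S q).Nonempty) :
    IsPreSVT μ N k (Function.update S p (insert (k + 1) (S p))) := by
  set S' := Function.update S p (insert (k + 1) (S p))
  refine ⟨fun q hq => ?_, fun q hq i hi => ?_, fun i hi => ?_,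
    fun r c h1 h2 => hS.update_insert_nonempty_of_isSuccCell hsucc h1 h2 (.inl rfl),
    fun r c h1 h2 => hS.update_insert_nonempty_of_isSuccCell hsucc h1 h2 (.inr rfl),
    fun r c h1 h2 => hS.update_insert_lt_of_isSuccCell le_rfl hpred h1 h2 (.inl rfl),
    fun r c h1 h2 => hS.update_insert_lt_of_isSuccCell le_rfl hpred h1 h2 (.inr rfl), ?_⟩
  · simp only [S']
    rw [Function.update_of_ne (ne_of_mem_of_not_mem hp hq).symm, hS.support q hq]
  · rw [mem_update_insert_iff] at hi
    rcases hi with hi | ⟨-, rfl⟩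
    · have := mem_Icc.1 (hS.subset q hq hi)
      exact mem_Icc.2 ⟨by omega, this.2⟩
    · exact mem_Icc.2 ⟨le_rfl, hkN⟩
  · rcases eq_or_ne i (k + 1) with rfl | hik
    · refine ⟨p, ⟨hp, mem_update_insert_iff.2 (.inr ⟨rfl, rfl⟩)⟩, ?_⟩
      rintro q ⟨-, hq⟩
      rcases mem_update_insert_iff.1 hq with hq | ⟨rfl, -⟩
      · exact absurd (hS.lt_of_mem hq) (lt_irrefl _)
      · rfl
    · have hi' : i ∈ Icc (k + 1 + 1) N := by
        have := mem_Icc.1 hi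
        exact mem_Icc.2 ⟨by omega, this.2⟩
      simpa [S', mem_update_insert_iff, hik] using hS.exactlyOnce i hi'
  · have hsub : μ.filter (fun q => S' q = ∅) ⊆ (μ.filter (fun q => S q = ∅)).erase p := by
      intro q
      simp only [mem_filter, mem_erase, ← not_nonempty_iff_eq_empty, S',
        update_insert_nonempty_iff, not_or]
      tauto
    refine (card_le_card hsub).trans ?_
    rcases hempty with hp0 | hall
    · rw [card_erase_of_mem (mem_filter.2 ⟨hp, hp0⟩)]
      have := hS.empties
      omega
    · rw [filter_false_of_mem fun q hq => (hall q hq).ne_empty]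
      simp

lemma exists_insertion_cell (hY : IsYoung μ) (h11 : ((1, 1) : ℕ × ℕ) ∈ μ)
    (hS : IsPreSVT μ N k S) :
    ∃ p ∈ μ, (∀ q ∈ μ, IsSuccCell q p → S q = ∅) ∧
      (∀ q ∈ μ, IsSuccCell p q → (S q).Nonempty) ∧ (S p = ∅ ∨ ∀ q ∈ μ, (S q).Nonempty) := by
  by_cases hall : ∀ q ∈ μ, (S q).Nonempty
  · exact ⟨(1, 1), h11, fun q hq h => absurd h (hY.not_isSuccCell_one_one hq),
      fun q hq _ => hall q hq, .inr hall⟩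
  simp only [not_forall, not_nonempty_iff_eq_empty] at hall
  obtain ⟨q₀, hq₀, hq₀e⟩ := hall
  obtain ⟨p, hp, hmax⟩ := (μ.filter (fun q => S q = ∅)).exists_max_image (fun q => q.1 + q.2)
    ⟨q₀, mem_filter.2 ⟨hq₀, hq₀e⟩⟩
  obtain ⟨hp, hpe⟩ := mem_filter.1 hp
  refine ⟨p, hp, fun q hq h => ?_, fun q hq h => ?_, .inl hpe⟩
  · by_contra hqe
    have := hS.nonempty_of_isSuccCell hq hp h (nonempty_iff_ne_empty.2 hqe)
    exact this.ne_empty hpe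
  · by_contra hqe
    have := hmax q (mem_filter.2 ⟨hq, not_nonempty_iff_eq_empty.1 hqe⟩)
    have := h.add_eq
    omega

theorem exists_svt_superset (hY : IsYoung μ) (h11 : ((1, 1) : ℕ × ℕ) ∈ μ) (hk : k ≤ N)
    (hS : IsPreSVT μ N k S) : ∃ T, IsSVT μ N T ∧ ∀ p, S p ⊆ T p := by
  induction k generalizing S with
  | zero => exact ⟨S, hS, fun _ => subset_rfl⟩
  | succ k ih =>
    obtain ⟨p, hp, hpred, hsucc, hempty⟩ := hS.exists_insertion_cell hY h11
    obtain ⟨T, hT, hST⟩ := ih (by omega) (hS.update_insert hp hk hpred hsucc hempty)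
    refine ⟨T, hT, fun q => subset_trans (fun i hi => ?_) (hST q)⟩
    exact mem_update_insert_iff.2 (.inl hi)

end IsPreSVT

theorem finite_setOf_isPreSVT (μ : Finset (ℕ × ℕ)) (N k : ℕ) :
    {T | IsPreSVT μ N k T}.Finite := by
  refine (Set.finite_range fun (g : μ → (Icc (k + 1) N).powerset) p =>
    if h : p ∈ μ then (g ⟨p, h⟩ : Finset ℕ) else ∅).subset fun T hT => ?_
  refine ⟨fun p => ⟨T p, mem_powerset.2 (hT.subset p p.2)⟩, funext fun p => ?_⟩
  by_cases h : p ∈ μ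
  · simp [h]
  · simp [h, hT.support p h]

theorem pretableau_extends_general (lam : Finset (ℕ × ℕ)) (hY : IsYoung lam)
    (hne : lam.Nonempty) (N k : ℕ) (hk : k ≤ N)
    (S : ℕ × ℕ → Finset ℕ) (hS : IsPreSVT lam N k S) :
    (∃ T : ℕ × ℕ → Finset ℕ, IsSVT lam N T ∧ ∀ p, S p ⊆ T p) ∧
    1 ≤ fSVT lam N S := by
  obtain ⟨T, hT, hST⟩ := hS.exists_svt_superset hY (hY.one_one_mem hne) hk
  have hfin : (SVTset lam N S).Finite := (finite_setOf_isPreSVT lam N 0).subset fun _ h => h.1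
  exact ⟨⟨T, hT, hST⟩, (Set.ncard_pos hfin).2 ⟨T, hT, hST⟩⟩

/-- Every `N⟨k⟩`-standard set-valued pre-tableau of shape `λ` extends
to an `N`-standard set-valued tableau; that is, `f^{λ,N,S} ≥ 1`. -/
theorem pretableau_extends (lam : Finset (ℕ × ℕ)) (hY : IsYoung lam)
    (hne : lam.Nonempty) (N k : ℕ) (hN : lam.card ≤ N) (hk : k ≤ N)
    (S : ℕ × ℕ → Finset ℕ) (hS : IsPreSVT lam N k S) :
    (∃ T : ℕ × ℕ → Finset ℕ, IsSVT lam N T ∧ ∀ p, S p ⊆ T p) ∧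
    1 ≤ fSVT lam N S :=
  pretableau_extends_general lam hY hne N k hk S hS
end

section
/- Let λ be a Young diagram, N ≥ |λ|, and let T be an N-standard set-valued tableau of shape λ. Then: (a) for every 0 ≤ k ≤ N, the set {(r,c) ∈ λ : max T(r,c) ≤ k} is a Young diagram; (b) the |λ| values max T(r,c), for (r,c) ∈ λ, are pairwise distinct, and the largest of them equals N; and (c) if j_1 < j_2 < ... < j_{|λ|} is the increasing list of these maxima, then |{(r,c) ∈ λ : max T(r,c) ≤ j_m}| = m for every 1 ≤ m ≤ |λ|. -/
open Finset

lemma count_le_sort (S : Finset ℕ) (m : ℕ) (hm : m < S.card) :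
    (S.filter (fun y => y ≤ ((S.sort (· ≤ ·)).getD m 0))).card = m + 1 := by
  set l := S.sort (· ≤ ·) with hl
  have hlen : l.length = S.card := Finset.length_sort _
  have hml : m < l.length := by omega
  have hslt : l.Pairwise (· < ·) := (Finset.sortedLT_sort S).pairwise
  have hnd : l.Nodup := Finset.sort_nodup S _
  have hg : l.getD m 0 = l[m] := List.getD_eq_getElem l 0 hml
  rw [hg]
  have key : S.filter (fun y => y ≤ l[m]) = (l.take (m+1)).toFinset := by
    ext y
    simp only [Finset.mem_filter, List.mem_toFinset]
    constructor
    · rintro ⟨hyS, hyle⟩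
      have hyl : y ∈ l := (Finset.mem_sort _).mpr hyS
      obtain ⟨i, hi, rfl⟩ := List.getElem_of_mem hyl
      have him : i ≤ m := by
        by_contra h
        have := hslt.rel_get_of_lt (a := ⟨m, hml⟩) (b := ⟨i, hi⟩) (by simp; omega)
        simp [List.get_eq_getElem] at this
        omega
      have hi' : i < (l.take (m+1)).length := by simp; omega
      have : (l.take (m+1))[i] ∈ l.take (m+1) := List.getElem_mem hi'
      rwa [List.getElem_take] at this
    · intro hy
      have hyl : y ∈ l := List.mem_of_mem_take hy
      refine ⟨(Finset.mem_sort _).mp hyl, ?_⟩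
      obtain ⟨i, hi, rfl⟩ := List.getElem_of_mem hy
      rw [List.getElem_take]
      have hi2 : i < l.length := by simp at hi; omega
      have := (hslt.imp (R := (· < ·)) (S := (· ≤ ·)) le_of_lt).rel_get_of_le (a := ⟨i, hi2⟩) (b := ⟨m, hml⟩)
        (by simp at hi ⊢; omega)
      simpa [List.get_eq_getElem] using this
  rw [key, List.toFinset_card_of_nodup (hnd.sublist (List.take_sublist _ _)),
    List.length_take]
  omega

/-- For an `N`-standard set-valued tableau `T` of shape `λ`:
(a) for every `k ≤ N` the cells with `max T(r,c) ≤ k` form a Young diagram;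
(b) the maxima `max T(r,c)` are pairwise distinct and the largest equals `N`;
(c) if `j_1 < … < j_{|λ|}` lists these maxima then exactly `m` cells have
maximum at most `j_m`. -/
theorem svt_maxima (lam : Finset (ℕ × ℕ)) (hY : IsYoung lam) (N : ℕ)
    (hN : lam.card ≤ N) (T : ℕ × ℕ → Finset ℕ) (hT : IsSVT lam N T) :
    (∀ k ≤ N, IsYoung (lam.filter (fun p => maxv (T p) ≤ k))) ∧
    Set.InjOn (fun p => maxv (T p)) ↑lam ∧
    (lam.Nonempty → lam.sup (fun p => maxv (T p)) = N) ∧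
    (∀ m : ℕ, 1 ≤ m → m ≤ lam.card →
      (lam.filter (fun p => maxv (T p) ≤
        ((lam.image (fun p => maxv (T p))).sort (· ≤ ·)).getD (m - 1) 0)).card = m) := by
  obtain ⟨hs, hsub, huniq, hdn, hrn, hdl, hrl, hemp⟩ := hT
  -- every cell is nonempty
  have hne : ∀ p ∈ lam, (T p).Nonempty := by
    intro p hp
    rw [Finset.nonempty_iff_ne_empty]
    intro h
    have h0 : (lam.filter (fun p => T p = ∅)).card = 0 := Nat.le_zero.mp hemp
    have h1 : p ∈ lam.filter (fun p => T p = ∅) := Finset.mem_filter.mpr ⟨hp, h⟩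
    rw [Finset.card_eq_zero] at h0
    simp [h0] at h1
  have hmem : ∀ p ∈ lam, maxv (T p) ∈ T p := by
    intro p hp
    obtain ⟨b, hb, he⟩ := Finset.exists_mem_eq_sup (T p) (hne p hp) id
    rw [maxv, he]; exact hb
  have hle : ∀ p ∈ lam, 1 ≤ maxv (T p) ∧ maxv (T p) ≤ N := by
    intro p hp
    have := hsub p hp (hmem p hp)
    simpa using this
  -- monotone along rows
  have hrow : ∀ r c d : ℕ, (r, c) ∈ lam → (r, c + d) ∈ lam →
      maxv (T (r, c)) ≤ maxv (T (r, c + d)) := by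
    intro r c d
    induction d with
    | zero => intro _ _; exact le_refl _
    | succ d ih =>
      intro h1 h2
      have hmid : (r, c + d) ∈ lam := by
        obtain ⟨ha, hb, hc⟩ := hY _ h2
        obtain ⟨_, hb', _⟩ := hY _ h1
        exact hc r (c + d) (by simpa using ha) le_rfl (by simp at hb' ⊢; omega) (by omega)
      have hstep := hrl r (c + d) hmid (by exact h2) _ (hmem _ hmid) _ (hmem _ h2)
      exact le_trans (ih h1 hmid) (le_of_lt hstep)
  have hcol : ∀ r c d : ℕ, (r, c) ∈ lam → (r + d, c) ∈ lam →
      maxv (T (r, c)) ≤ maxv (T (r + d, c)) := by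
    intro r c d
    induction d with
    | zero => intro _ _; exact le_refl _
    | succ d ih =>
      intro h1 h2
      have hmid : (r + d, c) ∈ lam := by
        obtain ⟨ha, hb, hc⟩ := hY _ h2
        obtain ⟨ha', _, _⟩ := hY _ h1
        exact hc (r + d) c (by simp at ha' ⊢; omega) (by omega) (by simpa using hb) le_rfl
      have hstep := hdl (r + d) c hmid (by exact h2) _ (hmem _ hmid) _ (hmem _ h2)
      exact le_trans (ih h1 hmid) (le_of_lt hstep)
  have hmono : ∀ q ∈ lam, ∀ p ∈ lam, q.1 ≤ p.1 → q.2 ≤ p.2 →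
      maxv (T q) ≤ maxv (T p) := by
    rintro ⟨r', c'⟩ hq ⟨r, c⟩ hp h1 h2
    simp only at h1 h2
    have hmid : (r', c) ∈ lam := by
      obtain ⟨ha, hb, hc⟩ := hY _ hp
      obtain ⟨ha', hb', _⟩ := hY _ hq
      exact hc r' c (by simpa using ha') h1 (by simpa using hb) le_rfl
    calc maxv (T (r', c')) ≤ maxv (T (r', c)) := by
          have := hrow r' c' (c - c') hq (by rwa [Nat.add_sub_cancel' h2])
          rwa [Nat.add_sub_cancel' h2] at this
      _ ≤ maxv (T (r, c)) := by
          have := hcol r' c (r - r') hmid (by rwa [Nat.add_sub_cancel' h1])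
          rwa [Nat.add_sub_cancel' h1] at this
  -- injectivity
  have hinj : Set.InjOn (fun p => maxv (T p)) ↑lam := by
    intro p hp q hq h
    simp only at h
    have hp' : p ∈ lam := hp
    have hq' : q ∈ lam := hq
    have hi : maxv (T p) ∈ Finset.Icc (0 + 1) N := hsub p hp' (hmem p hp')
    obtain ⟨w, _, hw⟩ := huniq (maxv (T p)) hi
    have e1 := hw p ⟨hp', hmem p hp'⟩
    have e2 := hw q ⟨hq', h ▸ hmem q hq'⟩
    rw [e1, e2]
  refine ⟨?_, hinj, ?_, ?_⟩
  · -- (a)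
    intro k hk p hp
    rw [Finset.mem_filter] at hp
    obtain ⟨hpl, hpk⟩ := hp
    obtain ⟨ha, hb, hc⟩ := hY p hpl
    refine ⟨ha, hb, ?_⟩
    intro r' c' h1 h2 h3 h4
    rw [Finset.mem_filter]
    have hm : (r', c') ∈ lam := hc r' c' h1 h2 h3 h4
    exact ⟨hm, le_trans (hmono _ hm p hpl h2 h4) hpk⟩
  · -- (b) largest is N
    intro hlam
    have hN1 : 1 ≤ N := by have := Finset.card_pos.mpr hlam; omega
    obtain ⟨p, ⟨hp, hNp⟩, _⟩ := huniq N (by simp [hN1])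
    have h1 : maxv (T p) = N :=
      le_antisymm (hle p hp).2 (Finset.le_sup (f := id) hNp)
    exact le_antisymm (Finset.sup_le fun q hq => (hle q hq).2)
      (h1 ▸ Finset.le_sup (f := fun p => maxv (T p)) hp)
  · -- (c)
    intro m hm1 hm2
    have hcard : (lam.image (fun p => maxv (T p))).card = lam.card :=
      Finset.card_image_of_injOn hinj
    have hmlt : m - 1 < (lam.image (fun p => maxv (T p))).card := by omega
    have := count_le_sort (lam.image (fun p => maxv (T p))) (m - 1) hmlt
    -- transfer the count through the injective image
    have himg : (lam.filter (fun p => maxv (T p) ≤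
        ((lam.image (fun p => maxv (T p))).sort (· ≤ ·)).getD (m - 1) 0)).image
          (fun p => maxv (T p)) =
        (lam.image (fun p => maxv (T p))).filter (fun y => y ≤
          ((lam.image (fun p => maxv (T p))).sort (· ≤ ·)).getD (m - 1) 0) := by
      ext y
      simp only [Finset.mem_image, Finset.mem_filter]
      constructor
      · rintro ⟨p, ⟨hp, hp2⟩, rfl⟩
        exact ⟨⟨p, hp, rfl⟩, hp2⟩
      · rintro ⟨⟨p, hp, rfl⟩, hy⟩
        exact ⟨p, ⟨hp, hy⟩, rfl⟩
    have hcard2 : (lam.filter (fun p => maxv (T p) ≤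
        ((lam.image (fun p => maxv (T p))).sort (· ≤ ·)).getD (m - 1) 0)).card =
        ((lam.filter (fun p => maxv (T p) ≤
          ((lam.image (fun p => maxv (T p))).sort (· ≤ ·)).getD (m - 1) 0)).image
            (fun p => maxv (T p))).card := by
      rw [Finset.card_image_of_injOn (hinj.mono (by
        intro x hx
        simp only [Finset.coe_filter, Set.mem_setOf_eq] at hx
        exact hx.1))]
    rw [hcard2, himg, this]
    omega
end

section
/- Let λ be a Young diagram, N ≥ |λ|, 1 ≤ k ≤ N, and let S be an N⟨k⟩-standard set-valued pre-tableau of shape λ. Then SVT(λ,N,S) is the disjoint union, over all N⟨k−1⟩-standard set-valued pre-tableaux A of shape λ satisfying S(r,c) ⊆ A(r,c) for every cell, of the sets SVT(λ,N,A). Consequently f^{λ,N,S} = ∑_A f^{λ,N,A}, where the sum runs over all such A. -/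
open Finset

-- auxiliary lemmas

private lemma svt_cell_nonempty {μ : Finset (ℕ × ℕ)} {N : ℕ} {T : ℕ × ℕ → Finset ℕ}
    (hT : IsSVT μ N T) {p : ℕ × ℕ} (hp : p ∈ μ) : (T p).Nonempty := by
  rw [Finset.nonempty_iff_ne_empty]
  intro he
  have h1 := hT.empties
  have hmem : p ∈ μ.filter (fun q => T q = ∅) := Finset.mem_filter.mpr ⟨hp, he⟩
  have := Finset.card_pos.mpr ⟨p, hmem⟩
  omega

private lemma svt_subset' {μ : Finset (ℕ × ℕ)} {N : ℕ} {T : ℕ × ℕ → Finset ℕ}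
    (hT : IsSVT μ N T) {p : ℕ × ℕ} (hp : p ∈ μ) : T p ⊆ Finset.Icc 1 N :=
  hT.subset p hp

private lemma svt_unique {μ : Finset (ℕ × ℕ)} {N : ℕ} {T : ℕ × ℕ → Finset ℕ}
    (hT : IsSVT μ N T) {i : ℕ} (hi : i ∈ Finset.Icc 1 N) {p q : ℕ × ℕ}
    (hp : p ∈ μ) (hq : q ∈ μ) (hip : i ∈ T p) (hiq : i ∈ T q) : p = q := by
  obtain ⟨r, _, hr⟩ := hT.exactlyOnce i hi
  rw [hr p ⟨hp, hip⟩, hr q ⟨hq, hiq⟩]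

private lemma restrict_preSVT {μ : Finset (ℕ × ℕ)} {N k : ℕ}
    (hk1 : 1 ≤ k) (hkN : k ≤ N) {T : ℕ × ℕ → Finset ℕ} (hT : IsSVT μ N T) :
    IsPreSVT μ N (k - 1) (fun p => T p ∩ Finset.Icc k N) := by
  have hk : k - 1 + 1 = k := by omega
  constructor
  · intro p hp
    simp [hT.support p hp]
  · intro p _ i hi
    rw [hk]
    exact (Finset.mem_inter.mp hi).2
  · intro i hi
    rw [hk] at hi
    rw [Finset.mem_Icc] at hi
    obtain ⟨p, ⟨hpμ, hip⟩, hu⟩ := hT.exactlyOnce i (by simp; omega)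
    refine ⟨p, ⟨hpμ, Finset.mem_inter.mpr ⟨hip, by simp [Finset.mem_Icc]; omega⟩⟩, ?_⟩
    intro q ⟨hqμ, hiq⟩
    exact hu q ⟨hqμ, (Finset.mem_inter.mp hiq).1⟩
  · intro r c h1 h2 hne
    obtain ⟨a, ha⟩ := hne
    rw [Finset.mem_inter, Finset.mem_Icc] at ha
    obtain ⟨b, hb⟩ := hT.down_ne r c h1 h2 ⟨a, ha.1⟩
    have hab := hT.down_lt r c h1 h2 a ha.1 b hb
    have hbN : b ∈ Finset.Icc 1 N := svt_subset' hT h2 hb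
    rw [Finset.mem_Icc] at hbN
    exact ⟨b, Finset.mem_inter.mpr ⟨hb, by rw [Finset.mem_Icc]; omega⟩⟩
  · intro r c h1 h2 hne
    obtain ⟨a, ha⟩ := hne
    rw [Finset.mem_inter, Finset.mem_Icc] at ha
    obtain ⟨b, hb⟩ := hT.right_ne r c h1 h2 ⟨a, ha.1⟩
    have hab := hT.right_lt r c h1 h2 a ha.1 b hb
    have hbN : b ∈ Finset.Icc 1 N := svt_subset' hT h2 hb
    rw [Finset.mem_Icc] at hbN
    exact ⟨b, Finset.mem_inter.mpr ⟨hb, by rw [Finset.mem_Icc]; omega⟩⟩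
  · intro r c h1 h2 a ha b hb
    exact hT.down_lt r c h1 h2 a (Finset.mem_inter.mp ha).1 b (Finset.mem_inter.mp hb).1
  · intro r c h1 h2 a ha b hb
    exact hT.right_lt r c h1 h2 a (Finset.mem_inter.mp ha).1 b (Finset.mem_inter.mp hb).1
  · -- empties
    have hcard : (Finset.Icc 1 (k - 1)).card = k - 1 := by
      rw [Nat.card_Icc]; omega
    calc (μ.filter (fun p => T p ∩ Finset.Icc k N = ∅)).card
        ≤ (Finset.Icc 1 (k - 1)).card := ?_
      _ = k - 1 := hcard
    apply Finset.card_le_card_of_injOn (fun p => (T p).sup id)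
    · intro p hp
      rw [Finset.mem_coe, Finset.mem_filter] at hp
      obtain ⟨hpμ, hpe⟩ := hp
      have hne := svt_cell_nonempty hT hpμ
      obtain ⟨b, hb, he⟩ := Finset.exists_mem_eq_sup' hne id
      have hmem : (T p).sup id ∈ T p := by
        rw [← Finset.sup'_eq_sup hne id, he]; exact hb
      have h1 : (T p).sup id ∈ Finset.Icc 1 N := svt_subset' hT hpμ hmem
      have h2 : (T p).sup id ∉ Finset.Icc k N := by
        intro hc
        have : (T p).sup id ∈ T p ∩ Finset.Icc k N := Finset.mem_inter.mpr ⟨hmem, hc⟩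
        rw [hpe] at this
        exact absurd this (Finset.notMem_empty _)
      rw [Finset.mem_coe]
      rw [Finset.mem_Icc] at h1 ⊢
      rw [Finset.mem_Icc] at h2
      beta_reduce
      omega
    · intro p hp q hq heq
      rw [Finset.coe_filter, Set.mem_setOf_eq] at hp hq
      obtain ⟨hpμ, _⟩ := hp
      obtain ⟨hqμ, _⟩ := hq
      have hnep := svt_cell_nonempty hT hpμ
      have hneq := svt_cell_nonempty hT hqμ
      have hmp : (T p).sup id ∈ T p := by
        obtain ⟨b, hb, he⟩ := Finset.exists_mem_eq_sup' hnep id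
        rw [← Finset.sup'_eq_sup hnep id, he]; exact hb
      have hmq : (T q).sup id ∈ T q := by
        obtain ⟨b, hb, he⟩ := Finset.exists_mem_eq_sup' hneq id
        rw [← Finset.sup'_eq_sup hneq id, he]; exact hb
      have heq' : (T p).sup id = (T q).sup id := heq
      rw [heq'] at hmp
      exact svt_unique hT (svt_subset' hT hqμ hmq) hpμ hqμ hmp hmq

private lemma A_eq_restrict {μ : Finset (ℕ × ℕ)} {N k : ℕ} (hk1 : 1 ≤ k)
    {A T : ℕ × ℕ → Finset ℕ} (hA : IsPreSVT μ N (k - 1) A) (hT : IsSVT μ N T)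
    (hAT : ∀ p, A p ⊆ T p) : A = fun p => T p ∩ Finset.Icc k N := by
  have hk : k - 1 + 1 = k := by omega
  funext p
  by_cases hp : p ∈ μ
  · apply Finset.Subset.antisymm
    · intro i hi
      refine Finset.mem_inter.mpr ⟨hAT p hi, ?_⟩
      have := hA.subset p hp hi
      rwa [hk] at this
    · intro i hi
      rw [Finset.mem_inter] at hi
      obtain ⟨hiT, hik⟩ := hi
      have hik' : i ∈ Finset.Icc (k - 1 + 1) N := by rwa [hk]
      obtain ⟨q, ⟨hqμ, hiq⟩, _⟩ := hA.exactlyOnce i hik'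
      have hiTq : i ∈ T q := hAT q hiq
      have hi1 : i ∈ Finset.Icc 1 N := by
        rw [Finset.mem_Icc] at hik ⊢; omega
      have := svt_unique hT hi1 hqμ hp hiTq hiT
      rwa [← this]
  · rw [hA.support p hp, hT.support p hp]
    simp

/-- For `1 ≤ k ≤ N`, `SVT(λ,N,S)` is the disjoint union of the sets
`SVT(λ,N,A)` over all `N⟨k−1⟩`-standard set-valued pre-tableaux `A ⊇ S`;
consequently `f^{λ,N,S} = ∑_A f^{λ,N,A}`. -/
theorem svt_disjoint_union (lam : Finset (ℕ × ℕ)) (hY : IsYoung lam)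
    (N k : ℕ) (hN : lam.card ≤ N) (hk1 : 1 ≤ k) (hkN : k ≤ N)
    (S : ℕ × ℕ → Finset ℕ) (hS : IsPreSVT lam N k S) :
    (∀ T : ℕ × ℕ → Finset ℕ,
      T ∈ SVTset lam N S ↔
        ∃ A : ℕ × ℕ → Finset ℕ, IsPreSVT lam N (k - 1) A ∧ (∀ p, S p ⊆ A p) ∧
          T ∈ SVTset lam N A) ∧
    (∀ A A' : ℕ × ℕ → Finset ℕ,
      IsPreSVT lam N (k - 1) A → (∀ p, S p ⊆ A p) →
      IsPreSVT lam N (k - 1) A' → (∀ p, S p ⊆ A' p) → A ≠ A' →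
      Disjoint (SVTset lam N A) (SVTset lam N A')) ∧
    (∀ 𝒜 : Finset (ℕ × ℕ → Finset ℕ),
      (∀ A : ℕ × ℕ → Finset ℕ,
        A ∈ 𝒜 ↔ (IsPreSVT lam N (k - 1) A ∧ ∀ p, S p ⊆ A p)) →
      fSVT lam N S = ∑ A ∈ 𝒜, fSVT lam N A) := by
  classical
  have part1 : ∀ T : ℕ × ℕ → Finset ℕ,
      T ∈ SVTset lam N S ↔
        ∃ A : ℕ × ℕ → Finset ℕ, IsPreSVT lam N (k - 1) A ∧ (∀ p, S p ⊆ A p) ∧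
          T ∈ SVTset lam N A := by
    intro T
    constructor
    · rintro ⟨hT, hST⟩
      refine ⟨fun p => T p ∩ Finset.Icc k N, restrict_preSVT hk1 hkN hT, ?_, hT, ?_⟩
      · intro p i hi
        by_cases hp : p ∈ lam
        · refine Finset.mem_inter.mpr ⟨hST p hi, ?_⟩
          have := hS.subset p hp hi
          rw [Finset.mem_Icc] at this ⊢
          omega
        · rw [hS.support p hp] at hi
          exact absurd hi (Finset.notMem_empty _)
      · intro p
        exact Finset.inter_subset_left
    · rintro ⟨A, _, hSA, hT, hAT⟩
      exact ⟨hT, fun p => (hSA p).trans (hAT p)⟩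
  have part2 : ∀ A A' : ℕ × ℕ → Finset ℕ,
      IsPreSVT lam N (k - 1) A → (∀ p, S p ⊆ A p) →
      IsPreSVT lam N (k - 1) A' → (∀ p, S p ⊆ A' p) → A ≠ A' →
      Disjoint (SVTset lam N A) (SVTset lam N A') := by
    intro A A' hA _ hA' _ hne
    rw [Set.disjoint_left]
    rintro T ⟨hT, hAT⟩ ⟨_, hA'T⟩
    exact hne ((A_eq_restrict hk1 hA hT hAT).trans (A_eq_restrict hk1 hA' hT hA'T).symm)
  refine ⟨part1, part2, ?_⟩
  intro 𝒜 h𝒜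
  -- finiteness of the set of all SVTs
  have hfinAll : {T : ℕ × ℕ → Finset ℕ | IsSVT lam N T}.Finite := by
    have : Set.InjOn
        (fun T : ℕ × ℕ → Finset ℕ => fun p : {x // x ∈ lam} =>
          (⟨T p.val ∩ Finset.Icc 1 N, Finset.mem_powerset.mpr Finset.inter_subset_right⟩ :
            {s : Finset ℕ // s ∈ (Finset.Icc 1 N).powerset}))
        {T : ℕ × ℕ → Finset ℕ | IsSVT lam N T} := by
      intro T hT T' hT' he
      funext p
      by_cases hp : p ∈ lam
      · have h1 : T p ∩ Finset.Icc 1 N = T p :=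
          Finset.inter_eq_left.mpr (svt_subset' hT hp)
        have h2 : T' p ∩ Finset.Icc 1 N = T' p :=
          Finset.inter_eq_left.mpr (svt_subset' hT' hp)
        have := congrFun he ⟨p, hp⟩
        rw [Subtype.mk.injEq] at this
        simpa [h1, h2] using this
      · rw [hT.support p hp, hT'.support p hp]
    exact Set.Finite.of_finite_image (Set.toFinite _) this
  have hsub : ∀ A : ℕ × ℕ → Finset ℕ, SVTset lam N A ⊆ {T | IsSVT lam N T} :=
    fun A T hT => hT.1
  have hfin : ∀ A : ℕ × ℕ → Finset ℕ, (SVTset lam N A).Finite :=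
    fun A => hfinAll.subset (hsub A)
  have hfinS : (SVTset lam N S).Finite := hfinAll.subset (fun T hT => hT.1)
  -- finset versions
  set g : (ℕ × ℕ → Finset ℕ) → Finset (ℕ × ℕ → Finset ℕ) :=
    fun A => (hfin A).toFinset with hg
  have hcardg : ∀ A, fSVT lam N A = (g A).card := by
    intro A
    rw [fSVT, hg]
    exact Set.ncard_eq_toFinset_card _ (hfin A)
  have hmain : hfinS.toFinset = 𝒜.biUnion g := by
    ext T
    rw [Set.Finite.mem_toFinset, Finset.mem_biUnion]
    constructor
    · intro hT
      obtain ⟨A, hA1, hA2, hA3⟩ := (part1 T).mp hT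
      exact ⟨A, (h𝒜 A).mpr ⟨hA1, hA2⟩, (Set.Finite.mem_toFinset _).mpr hA3⟩
    · rintro ⟨A, hA𝒜, hTA⟩
      obtain ⟨hA1, hA2⟩ := (h𝒜 A).mp hA𝒜
      exact (part1 T).mpr ⟨A, hA1, hA2, (Set.Finite.mem_toFinset _).mp hTA⟩
  have hdisj : ∀ A ∈ 𝒜, ∀ A' ∈ 𝒜, A ≠ A' → Disjoint (g A) (g A') := by
    intro A hA A' hA' hne
    obtain ⟨hA1, hA2⟩ := (h𝒜 A).mp hA
    obtain ⟨hA'1, hA'2⟩ := (h𝒜 A').mp hA'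
    have := part2 A A' hA1 hA2 hA'1 hA'2 hne
    rw [Finset.disjoint_left]
    intro T hTA hTA'
    rw [hg, Set.Finite.mem_toFinset] at hTA hTA'
    exact (Set.disjoint_left.mp this) hTA hTA'
  calc fSVT lam N S = hfinS.toFinset.card := Set.ncard_eq_toFinset_card _ hfinS
    _ = (𝒜.biUnion g).card := by rw [hmain]
    _ = ∑ A ∈ 𝒜, (g A).card := Finset.card_biUnion hdisj
    _ = ∑ A ∈ 𝒜, fSVT lam N A := by
        apply Finset.sum_congr rfl
        intro A _
        rw [hcardg]
end

section
/- Let λ be a nonempty Young diagram and N ≥ |λ|. Then f^{λ,N} ≥ f^λ · C(N−1, |λ|−1), where C(a,b) denotes the binomial coefficient. -/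
open Finset

/-!
Fix a standard Young tableau `F` of shape `λ` (with `n = |λ|`) and a set `C ⊆ {1,…,N}` of size
`n` containing `1`, say `c₁ = 1 < c₂ < ⋯ < cₙ`. Filling the cell with `F`-label `k` by the
interval `[c_k, c_{k+1})` (the last one running up to `N`) gives an `N`-standard set-valued
tableau, because the intervals are ordered exactly as their labels. The pair `(F, C)` is
recovered from the tableau: `C` is the set of cell minima, and `F` labels a cell by the rank in
`C` of any of its entries. There are `f^λ` choices of `F` and `C(N−1, n−1)` choices of `C`.
-/

def countLE (C : Finset ℕ) (i : ℕ) : ℕ := #(C.filter (· ≤ i))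

section countLE

variable {C : Finset ℕ}

lemma countLE_mono (C : Finset ℕ) : Monotone (countLE C) := fun _ _ hij =>
  card_le_card fun x hx => by
    rw [mem_filter] at hx ⊢
    exact ⟨hx.1, hx.2.trans hij⟩

lemma countLE_lt_of_mem {b j : ℕ} (hb : b ∈ C) (hjb : j < b) : countLE C j < countLE C b := by
  refine card_lt_card ⟨fun x hx => ?_, fun hsub => ?_⟩
  · rw [mem_filter] at hx ⊢
    exact ⟨hx.1, hx.2.trans hjb.le⟩
  have := (mem_filter.mp (hsub (mem_filter.mpr ⟨hb, le_rfl⟩))).2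
  omega

lemma countLE_le_card (C : Finset ℕ) (i : ℕ) : countLE C i ≤ #C :=
  card_le_card (filter_subset _ _)

lemma one_le_countLE {b i : ℕ} (hb : b ∈ C) (hbi : b ≤ i) : 1 ≤ countLE C i :=
  card_pos.mpr ⟨b, mem_filter.mpr ⟨hb, hbi⟩⟩

lemma image_countLE (C : Finset ℕ) : C.image (countLE C) = Icc 1 #C := by
  have hinj : Set.InjOn (countLE C) C := StrictMonoOn.injOn fun _ _ _ hb hab =>
    countLE_lt_of_mem hb hab
  refine eq_of_subset_of_card_le (fun k hk => ?_) ?_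
  · obtain ⟨b, hb, rfl⟩ := mem_image.mp hk
    exact mem_Icc.mpr ⟨one_le_countLE hb le_rfl, countLE_le_card C b⟩
  · rw [card_image_of_injOn hinj, Nat.card_Icc, Nat.add_sub_cancel]

lemma countLE_sub_one {b : ℕ} (hb : b ∉ C) : countLE C (b - 1) = countLE C b := by
  refine congrArg card (filter_congr fun x hx => ?_)
  have : x ≠ b := fun h => hb (h ▸ hx)
  omega

end countLE

def svtOfSYT (lam : Finset (ℕ × ℕ)) (N : ℕ) (F : ℕ × ℕ → ℕ) (C : Finset ℕ) :
    ℕ × ℕ → Finset ℕ :=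
  fun p => if p ∈ lam then (Icc 1 N).filter (fun i => countLE C i = F p) else ∅

section svtOfSYT

variable {lam : Finset (ℕ × ℕ)} {N : ℕ} {F : ℕ × ℕ → ℕ} {C : Finset ℕ}

lemma mem_svtOfSYT {p : ℕ × ℕ} (hp : p ∈ lam) {i : ℕ} :
    i ∈ svtOfSYT lam N F C p ↔ i ∈ Icc 1 N ∧ countLE C i = F p := by
  rw [svtOfSYT, if_pos hp, mem_filter]

lemma svtOfSYT_nonempty (hF : IsSYT lam F) (hCN : C ⊆ Icc 1 N) (hC : #C = #lam)
    {p : ℕ × ℕ} (hp : p ∈ lam) : (svtOfSYT lam N F C p).Nonempty := by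
  have hk : F p ∈ C.image (countLE C) := by
    rw [image_countLE, hC]
    exact hF.mem_range p hp
  obtain ⟨b, hb, hbF⟩ := mem_image.mp hk
  exact ⟨b, (mem_svtOfSYT hp).mpr ⟨hCN hb, hbF⟩⟩

lemma svtOfSYT_lt {p q : ℕ × ℕ} (hp : p ∈ lam) (hq : q ∈ lam)
    (hFpq : F p < F q) {a b : ℕ} (ha : a ∈ svtOfSYT lam N F C p)
    (hb : b ∈ svtOfSYT lam N F C q) : a < b := by
  have hab : countLE C a < countLE C b := by
    rw [((mem_svtOfSYT hp).mp ha).2, ((mem_svtOfSYT hq).mp hb).2]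
    exact hFpq
  exact (countLE_mono C).reflect_lt hab

lemma isSVT_svtOfSYT (hF : IsSYT lam F) (hC1 : 1 ∈ C) (hCN : C ⊆ Icc 1 N) (hC : #C = #lam) :
    IsSVT lam N (svtOfSYT lam N F C) where
  support p hp := by rw [svtOfSYT, if_neg hp]
  subset _ hp _ hi := ((mem_svtOfSYT hp).mp hi).1
  exactlyOnce i hi := by
    have hrank : countLE C i ∈ Icc 1 #lam :=
      mem_Icc.mpr ⟨one_le_countLE hC1 (mem_Icc.mp hi).1, hC ▸ countLE_le_card C i⟩
    obtain ⟨p, ⟨hp, hFp⟩, huniq⟩ := hF.exactlyOnce _ hrank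
    exact ⟨p, ⟨hp, (mem_svtOfSYT hp).mpr ⟨hi, hFp.symm⟩⟩,
      fun q ⟨hq, hiq⟩ => huniq q ⟨hq, ((mem_svtOfSYT hq).mp hiq).2.symm⟩⟩
  down_ne _ _ _ h _ := svtOfSYT_nonempty hF hCN hC h
  right_ne _ _ _ h _ := svtOfSYT_nonempty hF hCN hC h
  down_lt r c h₁ h₂ _ ha _ hb := svtOfSYT_lt h₁ h₂ (hF.down_lt r c h₁ h₂) ha hb
  right_lt r c h₁ h₂ _ ha _ hb := svtOfSYT_lt h₁ h₂ (hF.right_lt r c h₁ h₂) ha hb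
  empties := by
    rw [filter_false_of_mem fun p hp =>
      (svtOfSYT_nonempty hF hCN hC hp).ne_empty, card_empty]

lemma mem_iff_isLeast_svtOfSYT (hF : IsSYT lam F) (hC1 : 1 ∈ C) (hCN : C ⊆ Icc 1 N)
    (hC : #C = #lam) {b : ℕ} :
    b ∈ C ↔ ∃ p ∈ lam, IsLeast (svtOfSYT lam N F C p) b := by
  constructor
  · intro hb
    have hrank : countLE C b ∈ Icc 1 #lam :=
      mem_Icc.mpr ⟨one_le_countLE hb le_rfl, hC ▸ countLE_le_card C b⟩
    obtain ⟨p, ⟨hp, hFp⟩, -⟩ := hF.exactlyOnce _ hrank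
    refine ⟨p, hp, (mem_svtOfSYT hp).mpr ⟨hCN hb, hFp.symm⟩, fun j hj => ?_⟩
    by_contra! hjb
    have := countLE_lt_of_mem hb hjb
    have := ((mem_svtOfSYT hp).mp hj).2
    omega
  · rintro ⟨p, hp, hbp, hleast⟩
    by_contra hbC
    obtain ⟨hbN, hbF⟩ := (mem_svtOfSYT hp).mp hbp
    have hb1 : b ≠ 1 := fun h => hbC (h ▸ hC1)
    -- `b` is not a cell minimum: `b - 1` has the same rank, hence lies in the same cell
    have hpred : b - 1 ∈ svtOfSYT lam N F C p := by
      refine (mem_svtOfSYT hp).mpr ⟨?_, (countLE_sub_one hbC).trans hbF⟩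
      have := mem_Icc.mp hbN
      exact mem_Icc.mpr ⟨by omega, by omega⟩
    have := hleast hpred
    have := (mem_Icc.mp hbN).1
    omega

lemma eq_of_svtOfSYT_eq {F' : ℕ × ℕ → ℕ} {C' : Finset ℕ} (hF : IsSYT lam F) (hF' : IsSYT lam F')
    (hC1 : 1 ∈ C) (hCN : C ⊆ Icc 1 N) (hC : #C = #lam)
    (hC1' : 1 ∈ C') (hCN' : C' ⊆ Icc 1 N) (hC' : #C' = #lam)
    (h : svtOfSYT lam N F C = svtOfSYT lam N F' C') : F = F' ∧ C = C' := by
  have hCC' : C = C' := by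
    ext b
    rw [mem_iff_isLeast_svtOfSYT hF hC1 hCN hC, mem_iff_isLeast_svtOfSYT hF' hC1' hCN' hC', h]
  subst hCC'
  refine ⟨funext fun p => ?_, rfl⟩
  by_cases hp : p ∈ lam
  · obtain ⟨i, hi⟩ := svtOfSYT_nonempty hF hCN hC hp
    have hi' : i ∈ svtOfSYT lam N F' C p := h ▸ hi
    exact ((mem_svtOfSYT hp).mp hi).2.symm.trans ((mem_svtOfSYT hp).mp hi').2
  · rw [hF.support p hp, hF'.support p hp]

end svtOfSYT

lemma setOf_isSVT_finite (lam : Finset (ℕ × ℕ)) (N : ℕ) :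
    {T : ℕ × ℕ → Finset ℕ | IsSVT lam N T}.Finite := by
  refine Set.Finite.of_finite_image (f := fun T (p : lam) => T p) ?_ fun T hT T' hT' h => ?_
  · refine (Set.Finite.pi (t := fun _ => ((Icc 1 N).powerset : Set (Finset ℕ)))
      fun _ => finite_toSet _).subset ?_
    rintro _ ⟨T, hT, rfl⟩ p -
    exact mem_powerset.mpr (hT.subset p p.2)
  · funext p
    by_cases hp : p ∈ lam
    · exact congrFun h ⟨p, hp⟩
    · rw [hT.support p hp, hT'.support p hp]

lemma insert_one_of_mem_powersetCard {N k : ℕ} {B : Finset ℕ} (hN : 1 ≤ N)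
    (hB : B ∈ (Icc 2 N).powersetCard k) :
    1 ∉ B ∧ insert 1 B ⊆ Icc 1 N ∧ #(insert 1 B) = k + 1 := by
  obtain ⟨hB2, rfl⟩ := mem_powersetCard.mp hB
  have h1B : 1 ∉ B := fun h => by simpa using hB2 h
  exact ⟨h1B, insert_subset (mem_Icc.mpr ⟨le_rfl, hN⟩) (hB2.trans (Icc_subset_Icc_left one_le_two)),
    card_insert_of_notMem h1B⟩

theorem fSVT_lower_bound_general (lam : Finset (ℕ × ℕ))
    (hne : lam.Nonempty) (N : ℕ) (hN : lam.card ≤ N) :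
    fSYT lam * Nat.choose (N - 1) (lam.card - 1) ≤ fSVTall lam N := by
  have hn : #lam - 1 + 1 = #lam := Nat.sub_add_cancel (card_pos.mpr hne)
  set D := (Icc 2 N).powersetCard (#lam - 1)
  have hD : ∀ B ∈ D, 1 ∉ B ∧ insert 1 B ⊆ Icc 1 N ∧ #(insert 1 B) = #lam := fun B hB =>
    hn ▸ insert_one_of_mem_powersetCard (by omega) hB
  calc fSYT lam * Nat.choose (N - 1) (#lam - 1)
      = ({F | IsSYT lam F} ×ˢ (↑D : Set (Finset ℕ))).ncard := by
        rw [Set.ncard_prod, Set.ncard_coe_finset, card_powersetCard, Nat.card_Icc]; rfl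
    _ ≤ fSVTall lam N := by
      refine Set.ncard_le_ncard_of_injOn (fun FB => svtOfSYT lam N FB.1 (insert 1 FB.2))
        (fun ⟨F, B⟩ ⟨hF, hB⟩ => ?_) (fun ⟨F, B⟩ ⟨hF, hB⟩ ⟨F', B'⟩ ⟨hF', hB'⟩ h => ?_)
        (setOf_isSVT_finite lam N)
      · obtain ⟨-, hCN, hC⟩ := hD B hB
        exact isSVT_svtOfSYT hF (mem_insert_self 1 B) hCN hC
      · obtain ⟨h1B, hCN, hC⟩ := hD B hB
        obtain ⟨h1B', hCN', hC'⟩ := hD B' hB'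
        obtain ⟨rfl, hBB'⟩ := eq_of_svtOfSYT_eq hF hF' (mem_insert_self 1 B) hCN hC
          (mem_insert_self 1 B') hCN' hC' h
        rw [← erase_insert h1B, ← erase_insert h1B', hBB']

/-- For nonempty `λ` and `N ≥ |λ|`,
`f^{λ,N} ≥ f^λ · C(N−1, |λ|−1)`. -/
theorem fSVT_lower_bound (lam : Finset (ℕ × ℕ)) (hY : IsYoung lam)
    (hne : lam.Nonempty) (N : ℕ) (hN : lam.card ≤ N) :
    fSYT lam * Nat.choose (N - 1) (lam.card - 1) ≤ fSVTall lam N :=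
  fSVT_lower_bound_general lam hne N hN
end

section
/- Let λ be a nonempty Young diagram and N ≥ |λ|. Then f^{λ,N} ≤ f^λ · C(N−1, |λ|−1) · sv(λ)^{N−|λ|}, where C(a,b) denotes the binomial coefficient. -/
open Finset

-- ==================== auxiliary defs ====================
namespace SVTaux

noncomputable def mn (T : ℕ × ℕ → Finset ℕ) (p : ℕ × ℕ) : ℕ := sInf (T p : Set ℕ)

noncomputable def cellOf (lam : Finset (ℕ × ℕ)) (T : ℕ × ℕ → Finset ℕ) (i : ℕ) : ℕ × ℕ :=
  if h : ∃ p, p ∈ lam ∧ i ∈ T p then h.choose else (0, 0)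

noncomputable def rnk (lam : Finset (ℕ × ℕ)) (T : ℕ × ℕ → Finset ℕ) (p : ℕ × ℕ) : ℕ :=
  if p ∈ lam then (lam.filter fun q => mn T q ≤ mn T p).card else 0

noncomputable def Mset (lam : Finset (ℕ × ℕ)) (T : ℕ × ℕ → Finset ℕ) : Finset ℕ := lam.image (mn T)

noncomputable def cand (lam : Finset (ℕ × ℕ)) (m : ℕ × ℕ → ℕ) (i : ℕ) : Finset (ℕ × ℕ) :=
  lam.filter fun p => m p < i ∧ ((p.1 + 1, p.2) ∈ lam → i < m (p.1 + 1, p.2)) ∧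
    ((p.1, p.2 + 1) ∈ lam → i < m (p.1, p.2 + 1))

noncomputable def gfun (lam : Finset (ℕ × ℕ)) (N : ℕ) (T : ℕ × ℕ → Finset ℕ) (i : ℕ) : ℕ :=
  if i ∈ Finset.Icc 1 N \ Mset lam T then
    ((cand lam (mn T) i).filter fun q => q.1 < (cellOf lam T i).1).card else 0

variable {lam : Finset (ℕ × ℕ)} {N : ℕ} {T : ℕ × ℕ → Finset ℕ}

lemma nonempty_of_mem (hT : IsSVT lam N T) {p : ℕ × ℕ} (hp : p ∈ lam) : (T p).Nonempty := by
  rw [Finset.nonempty_iff_ne_empty]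
  intro h
  have := hT.empties
  have hmem : p ∈ lam.filter (fun p => T p = ∅) := Finset.mem_filter.mpr ⟨hp, h⟩
  have : (lam.filter (fun p => T p = ∅)).card ≥ 1 := Finset.card_pos.mpr ⟨p, hmem⟩
  omega

lemma mn_mem (hT : IsSVT lam N T) {p : ℕ × ℕ} (hp : p ∈ lam) : mn T p ∈ T p := by
  have h := nonempty_of_mem hT hp
  have : (↑(T p) : Set ℕ).Nonempty := by simpa using h
  simpa [mn] using Nat.sInf_mem this

lemma mn_le (hT : IsSVT lam N T) {p : ℕ × ℕ} {a : ℕ} (ha : a ∈ T p) : mn T p ≤ a :=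
  Nat.sInf_le (by simpa using ha)

lemma subset_Icc (hT : IsSVT lam N T) {p : ℕ × ℕ} (hp : p ∈ lam) :
    T p ⊆ Finset.Icc 1 N := hT.subset p hp

lemma existsUnique_cell (hT : IsSVT lam N T) {i : ℕ} (hi : i ∈ Finset.Icc 1 N) :
    ∃! p, p ∈ lam ∧ i ∈ T p := hT.exactlyOnce i hi

end SVTaux

namespace SVTaux
variable {lam : Finset (ℕ × ℕ)} {N : ℕ} {T : ℕ × ℕ → Finset ℕ}

lemma chainLt (hY : IsYoung lam) (hT : IsSVT lam N T) :
    ∀ n p1 p2 q1 q2, q1 + q2 ≤ n → (p1, p2) ∈ lam → (q1, q2) ∈ lam → p1 ≤ q1 → p2 ≤ q2 →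
      (p1, p2) ≠ (q1, q2) → ∀ a ∈ T (p1, p2), ∀ b ∈ T (q1, q2), a < b := by
  intro n
  induction n with
  | zero =>
      intro p1 p2 q1 q2 hn _ hq _ _ _ _ _ _ _
      have := (hY _ hq).1
      simp at this
      omega
  | succ n ih =>
      intro p1 p2 q1 q2 hn hp hq h1 h2 hne a ha b hb
      have hp1 : 1 ≤ p1 := (hY _ hp).1
      have hp2 : 1 ≤ p2 := (hY _ hp).2.1
      rcases Nat.lt_or_ge p1 q1 with hlt | hge
      · obtain ⟨r, rfl⟩ : ∃ r, q1 = r + 1 := ⟨q1 - 1, by omega⟩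
        have hq' : (r, q2) ∈ lam :=
          (hY _ hq).2.2 r q2 (by omega) (by omega) (hY _ hq).2.1 le_rfl
        obtain ⟨x, hx, hax⟩ : ∃ x ∈ T (r, q2), a ≤ x := by
          by_cases hpq : (p1, p2) = ((r : ℕ), q2)
          · exact ⟨a, hpq ▸ ha, le_rfl⟩
          · exact ⟨mn T (r, q2), mn_mem hT hq',
              (ih p1 p2 r q2 (by omega) hp hq' (by omega) h2 hpq a ha _ (mn_mem hT hq')).le⟩
        exact lt_of_le_of_lt hax (hT.down_lt r q2 hq' hq x hx b hb)
      · have h1e : p1 = q1 := le_antisymm h1 hge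
        have hne2 : p2 ≠ q2 := fun h => hne (by rw [h1e, h])
        have hlt2 : p2 < q2 := by omega
        obtain ⟨c, rfl⟩ : ∃ c, q2 = c + 1 := ⟨q2 - 1, by omega⟩
        have hq' : (q1, c) ∈ lam :=
          (hY _ hq).2.2 q1 c (by omega) le_rfl (by omega) (by omega)
        obtain ⟨x, hx, hax⟩ : ∃ x ∈ T (q1, c), a ≤ x := by
          by_cases hpq : (p1, p2) = (q1, (c : ℕ))
          · exact ⟨a, hpq ▸ ha, le_rfl⟩
          · exact ⟨mn T (q1, c), mn_mem hT hq',
              (ih p1 p2 q1 c (by omega) hp hq' h1 (by omega) hpq a ha _ (mn_mem hT hq')).le⟩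
        exact lt_of_le_of_lt hax (hT.right_lt q1 c hq' hq x hx b hb)

lemma lt_of_cells (hY : IsYoung lam) (hT : IsSVT lam N T) {p q : ℕ × ℕ}
    (hp : p ∈ lam) (hq : q ∈ lam) (h1 : p.1 ≤ q.1) (h2 : p.2 ≤ q.2) (hne : p ≠ q)
    {a b : ℕ} (ha : a ∈ T p) (hb : b ∈ T q) : a < b := by
  have := chainLt hY hT (q.1 + q.2) p.1 p.2 q.1 q.2 le_rfl (by simpa using hp)
    (by simpa using hq) h1 h2 (by simpa [Prod.ext_iff] using hne) a (by simpa using ha)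
    b (by simpa using hb)
  exact this

lemma mn_lt_mn (hY : IsYoung lam) (hT : IsSVT lam N T) {p q : ℕ × ℕ}
    (hp : p ∈ lam) (hq : q ∈ lam) (h1 : p.1 ≤ q.1) (h2 : p.2 ≤ q.2) (hne : p ≠ q) :
    mn T p < mn T q :=
  lt_of_cells hY hT hp hq h1 h2 hne (mn_mem hT hp) (mn_mem hT hq)

lemma mn_le_mn (hY : IsYoung lam) (hT : IsSVT lam N T) {p q : ℕ × ℕ}
    (hp : p ∈ lam) (hq : q ∈ lam) (h1 : p.1 ≤ q.1) (h2 : p.2 ≤ q.2) :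
    mn T p ≤ mn T q := by
  by_cases h : p = q
  · subst h; exact le_rfl
  · exact (mn_lt_mn hY hT hp hq h1 h2 h).le

lemma mn_injOn (hT : IsSVT lam N T) {p q : ℕ × ℕ}
    (hp : p ∈ lam) (hq : q ∈ lam) (h : mn T p = mn T q) : p = q := by
  have hi : mn T p ∈ Finset.Icc 1 N := subset_Icc hT hp (mn_mem hT hp)
  obtain ⟨u, _, huniq⟩ := hT.exactlyOnce (mn T p) hi
  have e1 := huniq p ⟨hp, mn_mem hT hp⟩
  have e2 := huniq q ⟨hq, h ▸ mn_mem hT hq⟩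
  rw [e1, e2]

end SVTaux

namespace SVTaux
variable {lam : Finset (ℕ × ℕ)} {N : ℕ} {T : ℕ × ℕ → Finset ℕ}

lemma card_Mset (hT : IsSVT lam N T) : (Mset lam T).card = lam.card :=
  Finset.card_image_of_injOn fun _ hp _ hq h => mn_injOn hT hp hq h

lemma Mset_subset (hT : IsSVT lam N T) : Mset lam T ⊆ Finset.Icc 1 N := by
  intro i hi
  obtain ⟨p, hp, rfl⟩ := Finset.mem_image.mp hi
  exact subset_Icc hT hp (mn_mem hT hp)

lemma one_mem_Mset (hT : IsSVT lam N T) (hN : 1 ≤ N) : 1 ∈ Mset lam T := by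
  obtain ⟨p, ⟨hp, hp1⟩, _⟩ := hT.exactlyOnce 1 (by simp [hN])
  have h1 : mn T p ≤ 1 := mn_le hT hp1
  have h2 : 1 ≤ mn T p := by
    have := subset_Icc hT hp (mn_mem hT hp)
    simp only [Finset.mem_Icc] at this
    exact this.1
  exact Finset.mem_image.mpr ⟨p, hp, by omega⟩

lemma cellOf_mem (hT : IsSVT lam N T) {i : ℕ} (hi : i ∈ Finset.Icc 1 N) :
    cellOf lam T i ∈ lam ∧ i ∈ T (cellOf lam T i) := by
  obtain ⟨p, hp, _⟩ := hT.exactlyOnce i hi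
  rw [cellOf, dif_pos ⟨p, hp⟩]
  exact (Exists.choose_spec (⟨p, hp⟩ : ∃ p, p ∈ lam ∧ i ∈ T p))

lemma cellOf_eq (hT : IsSVT lam N T) {i : ℕ} {p : ℕ × ℕ}
    (hp : p ∈ lam) (hip : i ∈ T p) : cellOf lam T i = p := by
  have hi : i ∈ Finset.Icc 1 N := subset_Icc hT hp hip
  obtain ⟨u, _, huniq⟩ := hT.exactlyOnce i hi
  have h1 := cellOf_mem hT hi
  rw [huniq _ h1, huniq p ⟨hp, hip⟩]

lemma rnk_pos (hT : IsSVT lam N T) {p : ℕ × ℕ} (hp : p ∈ lam) :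
    1 ≤ rnk lam T p := by
  rw [rnk, if_pos hp]
  exact Finset.card_pos.mpr ⟨p, Finset.mem_filter.mpr ⟨hp, le_rfl⟩⟩

lemma rnk_le (hT : IsSVT lam N T) {p : ℕ × ℕ} (hp : p ∈ lam) :
    rnk lam T p ≤ lam.card := by
  rw [rnk, if_pos hp]
  exact Finset.card_le_card (Finset.filter_subset _ _)

lemma rnk_lt_rnk (hT : IsSVT lam N T) {p q : ℕ × ℕ} (hp : p ∈ lam) (hq : q ∈ lam)
    (h : mn T p < mn T q) : rnk lam T p < rnk lam T q := by
  rw [rnk, if_pos hp, rnk, if_pos hq]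
  apply Finset.card_lt_card
  constructor
  · intro x hx
    simp only [Finset.mem_filter] at hx ⊢
    exact ⟨hx.1, hx.2.trans (le_of_lt h)⟩
  · intro hsub
    have := hsub (Finset.mem_filter.mpr ⟨hq, le_rfl⟩)
    simp only [Finset.mem_filter] at this
    omega

lemma rnk_injOn (hY : IsYoung lam) (hT : IsSVT lam N T) {p q : ℕ × ℕ}
    (hp : p ∈ lam) (hq : q ∈ lam) (h : rnk lam T p = rnk lam T q) : p = q := by
  rcases lt_trichotomy (mn T p) (mn T q) with hlt | heq | hgt
  · exact absurd h (Nat.ne_of_lt (rnk_lt_rnk hT hp hq hlt))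
  · exact mn_injOn hT hp hq heq
  · exact absurd h.symm (Nat.ne_of_lt (rnk_lt_rnk hT hq hp hgt))

lemma rnk_isSYT (hY : IsYoung lam) (hT : IsSVT lam N T) : IsSYT lam (rnk lam T) := by
  constructor
  · intro p hp; rw [rnk, if_neg hp]
  · intro p hp
    exact Finset.mem_Icc.mpr ⟨rnk_pos hT hp, rnk_le hT hp⟩
  · intro i hi
    -- surjectivity via injectivity and cardinality
    have hmaps : ∀ p ∈ lam, rnk lam T p ∈ Finset.Icc 1 lam.card :=
      fun p hp => Finset.mem_Icc.mpr ⟨rnk_pos hT hp, rnk_le hT hp⟩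
    have hinj : Set.InjOn (rnk lam T) lam :=
      fun p hp q hq h => rnk_injOn hY hT hp hq h
    have himg : lam.image (rnk lam T) = Finset.Icc 1 lam.card := by
      apply Finset.eq_of_subset_of_card_le
      · intro x hx
        obtain ⟨p, hp, rfl⟩ := Finset.mem_image.mp hx
        exact hmaps p hp
      · rw [Finset.card_image_of_injOn hinj, Nat.card_Icc]
        omega
    obtain ⟨p, hp, hpi⟩ := Finset.mem_image.mp (himg ▸ hi)
    exact ⟨p, ⟨hp, hpi⟩, fun q ⟨hq, hqi⟩ => rnk_injOn hY hT hq hp (hqi.trans hpi.symm)⟩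
  · intro r c h1 h2
    exact rnk_lt_rnk hT h1 h2 (mn_lt_mn hY hT h1 h2 (by simp) (by simp) (by simp))
  · intro r c h1 h2
    exact rnk_lt_rnk hT h1 h2 (mn_lt_mn hY hT h1 h2 (by simp) (by simp) (by simp))

end SVTaux

namespace SVTaux
variable {lam : Finset (ℕ × ℕ)} {N : ℕ} {T : ℕ × ℕ → Finset ℕ}

lemma cellOf_mem_cand (hT : IsSVT lam N T) {i : ℕ}
    (hi : i ∈ Finset.Icc 1 N) (hm : i ∉ Mset lam T) :
    cellOf lam T i ∈ cand lam (mn T) i := by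
  obtain ⟨hp, hip⟩ := cellOf_mem hT hi
  set p := cellOf lam T i with hpdef
  refine Finset.mem_filter.mpr ⟨hp, ?_, ?_, ?_⟩
  · have h1 : mn T p ≤ i := mn_le hT hip
    have h2 : mn T p ≠ i := fun h => hm (Finset.mem_image.mpr ⟨p, hp, h⟩)
    omega
  · intro hq
    exact hT.down_lt p.1 p.2 (by simpa using hp) hq i (by simpa using hip) _
      (mn_mem hT hq)
  · intro hq
    exact hT.right_lt p.1 p.2 (by simpa using hp) hq i (by simpa using hip) _
      (mn_mem hT hq)

lemma cand_antichain (hY : IsYoung lam) (hT : IsSVT lam N T) {i : ℕ} {p q : ℕ × ℕ}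
    (hp : p ∈ cand lam (mn T) i) (hq : q ∈ cand lam (mn T) i)
    (h1 : p.1 ≤ q.1) (h2 : p.2 ≤ q.2) : p = q := by
  by_contra hne
  obtain ⟨hpl, hpm, hpd, hpr⟩ := Finset.mem_filter.mp hp
  obtain ⟨hql, hqm, _, _⟩ := Finset.mem_filter.mp hq
  have hp1 : 1 ≤ p.2 := (hY _ hpl).2.1
  rcases Nat.lt_or_ge p.1 q.1 with hlt | hge
  · have hn : (p.1 + 1, p.2) ∈ lam :=
      (hY _ hql).2.2 (p.1 + 1) p.2 (by omega) (by omega) (by omega) h2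
    have hle : mn T (p.1 + 1, p.2) ≤ mn T q :=
      mn_le_mn hY hT hn hql (by simpa using hlt) (by simpa using h2)
    have := hpd hn
    omega
  · have h1e : p.1 = q.1 := le_antisymm h1 hge
    have hlt2 : p.2 < q.2 := by
      rcases Nat.lt_or_ge p.2 q.2 with h | h
      · exact h
      · exact absurd (Prod.ext h1e (by omega)) hne
    have hn : (p.1, p.2 + 1) ∈ lam :=
      (hY _ hql).2.2 p.1 (p.2 + 1) (by have := (hY _ hpl).1; omega) (by omega)
        (by omega) (by omega)
    have hle : mn T (p.1, p.2 + 1) ≤ mn T q :=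
      mn_le_mn hY hT hn hql (by simpa using h1) (by simpa using hlt2)
    have := hpr hn
    omega

lemma cand_rows_inj (hY : IsYoung lam) (hT : IsSVT lam N T) {i : ℕ} {p q : ℕ × ℕ}
    (hp : p ∈ cand lam (mn T) i) (hq : q ∈ cand lam (mn T) i)
    (h : p.1 = q.1) : p = q := by
  rcases Nat.le_total p.2 q.2 with h2 | h2
  · exact cand_antichain hY hT hp hq h.le h2
  · exact (cand_antichain hY hT hq hp h.ge h2).symm

end SVTaux

namespace SVTaux
variable {lam : Finset (ℕ × ℕ)} {N : ℕ} {T : ℕ × ℕ → Finset ℕ}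

lemma antichain_card_le_sv (hY : IsYoung lam) {A : Finset (ℕ × ℕ)} (hA : A ⊆ lam)
    (hanti : ∀ p ∈ A, ∀ q ∈ A, p.1 ≤ q.1 → p.2 ≤ q.2 → p = q) :
    A.card ≤ sv lam := by
  classical
  set k := A.card with hk
  have hrows : ∀ p ∈ A, ∀ q ∈ A, p.1 = q.1 → p = q := by
    intro p hp q hq h
    rcases Nat.le_total p.2 q.2 with h2 | h2
    · exact hanti p hp q hq h.le h2
    · exact (hanti q hq p hp h.ge h2).symm
  have hcols : ∀ p ∈ A, ∀ q ∈ A, p.2 = q.2 → p = q := by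
    intro p hp q hq h
    rcases Nat.le_total p.1 q.1 with h1 | h1
    · exact hanti p hp q hq h1 h.le
    · exact (hanti q hq p hp h1 h.ge).symm
  have hstair : staircase k ⊆ lam := by
    intro x hx
    obtain ⟨hmem, hsum⟩ := Finset.mem_filter.mp hx
    simp only [Finset.mem_product, Finset.mem_Icc] at hmem
    obtain ⟨⟨hx1, _⟩, ⟨hy1, _⟩⟩ := hmem
    -- find a cell of A with row ≥ x.1 and col ≥ x.2
    set B := A.filter (fun p => p.1 < x.1) with hB
    set C := A.filter (fun p => p.2 < x.2) with hC
    have hBcard : B.card ≤ x.1 - 1 := by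
      have hinj : Set.InjOn Prod.fst (↑B : Set (ℕ × ℕ)) := by
        intro p hp q hq h
        have hp' := Finset.mem_filter.mp (Finset.mem_coe.mp hp)
        have hq' := Finset.mem_filter.mp (Finset.mem_coe.mp hq)
        exact hrows p hp'.1 q hq'.1 h
      have : B.image Prod.fst ⊆ Finset.Icc 1 (x.1 - 1) := by
        intro r hr
        obtain ⟨p, hp, rfl⟩ := Finset.mem_image.mp hr
        obtain ⟨hpA, hplt⟩ := Finset.mem_filter.mp hp
        have := (hY p (hA hpA)).1
        rw [Finset.mem_Icc]
        omega
      calc B.card = (B.image Prod.fst).card := (Finset.card_image_of_injOn hinj).symm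
        _ ≤ (Finset.Icc 1 (x.1 - 1)).card := Finset.card_le_card this
        _ = x.1 - 1 := by rw [Nat.card_Icc]; omega
    have hCcard : C.card ≤ x.2 - 1 := by
      have hinj : Set.InjOn Prod.snd (↑C : Set (ℕ × ℕ)) := by
        intro p hp q hq h
        have hp' := Finset.mem_filter.mp (Finset.mem_coe.mp hp)
        have hq' := Finset.mem_filter.mp (Finset.mem_coe.mp hq)
        exact hcols p hp'.1 q hq'.1 h
      have : C.image Prod.snd ⊆ Finset.Icc 1 (x.2 - 1) := by
        intro r hr
        obtain ⟨p, hp, rfl⟩ := Finset.mem_image.mp hr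
        obtain ⟨hpA, hplt⟩ := Finset.mem_filter.mp hp
        have := (hY p (hA hpA)).2.1
        rw [Finset.mem_Icc]
        omega
      calc C.card = (C.image Prod.snd).card := (Finset.card_image_of_injOn hinj).symm
        _ ≤ (Finset.Icc 1 (x.2 - 1)).card := Finset.card_le_card this
        _ = x.2 - 1 := by rw [Nat.card_Icc]; omega
    have hunion : (B ∪ C).card < A.card := by
      have := Finset.card_union_le B C
      omega
    have hne : (A \ (B ∪ C)).Nonempty := by
      rw [← Finset.card_pos]
      have h1 : A.card - (B ∪ C).card ≤ (A \ (B ∪ C)).card := Finset.le_card_sdiff _ _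
      omega
    obtain ⟨p, hp⟩ := hne
    obtain ⟨hpA, hpnot⟩ := Finset.mem_sdiff.mp hp
    simp only [Finset.mem_union, hB, hC, Finset.mem_filter, not_or] at hpnot
    have hrow : x.1 ≤ p.1 := by
      by_contra h
      exact hpnot.1 ⟨hpA, by omega⟩
    have hcol : x.2 ≤ p.2 := by
      by_contra h
      exact hpnot.2 ⟨hpA, by omega⟩
    exact (hY p (hA hpA)).2.2 x.1 x.2 hx1 hrow hy1 hcol
  exact Nat.le_findGreatest (Finset.card_le_card hA) hstair

lemma cand_card_le_sv (hY : IsYoung lam) (hT : IsSVT lam N T) (i : ℕ) :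
    (cand lam (mn T) i).card ≤ sv lam :=
  antichain_card_le_sv hY (Finset.filter_subset _ _)
    (fun p hp q hq h1 h2 => cand_antichain hY hT hp hq h1 h2)

lemma gfun_lt_sv (hY : IsYoung lam) (hT : IsSVT lam N T) {i : ℕ}
    (hi : i ∈ Finset.Icc 1 N \ Mset lam T) : gfun lam N T i < sv lam := by
  rw [gfun, if_pos hi]
  obtain ⟨hi1, hi2⟩ := Finset.mem_sdiff.mp hi
  have hpc : cellOf lam T i ∈ cand lam (mn T) i := cellOf_mem_cand hT hi1 hi2
  have hssub : (cand lam (mn T) i).filter (fun q => q.1 < (cellOf lam T i).1) ⊂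
      cand lam (mn T) i := by
    refine Finset.ssubset_iff_of_subset (Finset.filter_subset _ _) |>.mpr ?_
    exact ⟨cellOf lam T i, hpc, by simp⟩
  exact lt_of_lt_of_le (Finset.card_lt_card hssub) (cand_card_le_sv hY hT i)

end SVTaux

namespace SVTaux
variable {lam : Finset (ℕ × ℕ)} {N : ℕ} {T T' : ℕ × ℕ → Finset ℕ}

lemma card_filter_le_mn (hT : IsSVT lam N T) {p : ℕ × ℕ} (hp : p ∈ lam) :
    (lam.filter fun q => mn T q ≤ mn T p).card
      = ((Mset lam T).filter (· ≤ mn T p)).card := by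
  apply Finset.card_bij (fun q _ => mn T q)
  · intro q hq
    obtain ⟨hql, hqle⟩ := Finset.mem_filter.mp hq
    exact Finset.mem_filter.mpr ⟨Finset.mem_image.mpr ⟨q, hql, rfl⟩, hqle⟩
  · intro q1 hq1 q2 hq2 h
    exact mn_injOn hT (Finset.mem_filter.mp hq1).1 (Finset.mem_filter.mp hq2).1 h
  · intro m hm
    obtain ⟨hmM, hmle⟩ := Finset.mem_filter.mp hm
    obtain ⟨q, hq, rfl⟩ := Finset.mem_image.mp hmM
    exact ⟨q, Finset.mem_filter.mpr ⟨hq, hmle⟩, rfl⟩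

lemma mrank_inj {M : Finset ℕ} {x y : ℕ} (hx : x ∈ M) (hy : y ∈ M)
    (h : (M.filter (· ≤ x)).card = (M.filter (· ≤ y)).card) : x = y := by
  have key : ∀ a b : ℕ, a ∈ M → b ∈ M → a < b →
      (M.filter (· ≤ a)).card < (M.filter (· ≤ b)).card := by
    intro a b ha hb hab
    apply Finset.card_lt_card
    constructor
    · intro z hz
      obtain ⟨h1, h2⟩ := Finset.mem_filter.mp hz
      exact Finset.mem_filter.mpr ⟨h1, by omega⟩
    · intro hsub
      have := hsub (Finset.mem_filter.mpr ⟨hb, le_rfl⟩)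
      simp only [Finset.mem_filter] at this
      omega
  rcases lt_trichotomy x y with hlt | heq | hgt
  · exact absurd h (Nat.ne_of_lt (key x y hx hy hlt))
  · exact heq
  · exact absurd h.symm (Nat.ne_of_lt (key y x hy hx hgt))

lemma mn_congr (hT : IsSVT lam N T) (hT' : IsSVT lam N T')
    (hM : Mset lam T = Mset lam T') (hr : rnk lam T = rnk lam T') :
    ∀ p ∈ lam, mn T p = mn T' p := by
  intro p hp
  have h1 := card_filter_le_mn hT hp
  have h2 := card_filter_le_mn hT' hp
  have hrp := congrFun hr p
  rw [rnk, rnk, if_pos hp, if_pos hp] at hrp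
  rw [h1, h2, ← hM] at hrp
  exact mrank_inj (Finset.mem_image.mpr ⟨p, hp, rfl⟩)
    (by have h3 : mn T' p ∈ Mset lam T' := Finset.mem_image.mpr ⟨p, hp, rfl⟩; rw [← hM] at h3; exact h3) hrp

lemma cand_congr (hT : IsSVT lam N T) (hT' : IsSVT lam N T')
    (hmn : ∀ p ∈ lam, mn T p = mn T' p) (i : ℕ) :
    cand lam (mn T) i = cand lam (mn T') i := by
  apply Finset.filter_congr
  intro p hp
  have h0 := hmn p hp
  constructor
  · rintro ⟨ha, hb, hc⟩
    refine ⟨by omega, fun hn => ?_, fun hn => ?_⟩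
    · rw [← hmn _ hn]; exact hb hn
    · rw [← hmn _ hn]; exact hc hn
  · rintro ⟨ha, hb, hc⟩
    refine ⟨by omega, fun hn => ?_, fun hn => ?_⟩
    · rw [hmn _ hn]; exact hb hn
    · rw [hmn _ hn]; exact hc hn

lemma cellOf_congr (hY : IsYoung lam) (hT : IsSVT lam N T) (hT' : IsSVT lam N T')
    (hM : Mset lam T = Mset lam T') (hr : rnk lam T = rnk lam T')
    (hg : gfun lam N T = gfun lam N T') :
    ∀ i ∈ Finset.Icc 1 N, cellOf lam T i = cellOf lam T' i := by
  intro i hi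
  have hmn := mn_congr hT hT' hM hr
  by_cases him : i ∈ Mset lam T
  · obtain ⟨p, hp, hmnp⟩ := Finset.mem_image.mp him
    have e1 : cellOf lam T i = p := cellOf_eq hT hp (hmnp ▸ mn_mem hT hp)
    have hmnp' : mn T' p = i := by rw [← hmn p hp]; exact hmnp
    have e2 : cellOf lam T' i = p := cellOf_eq hT' hp (hmnp' ▸ mn_mem hT' hp)
    rw [e1, e2]
  · have him' : i ∉ Mset lam T' := hM ▸ him
    have hc1 : cellOf lam T i ∈ cand lam (mn T) i := cellOf_mem_cand hT hi him
    have hc2 : cellOf lam T' i ∈ cand lam (mn T) i := by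
      rw [cand_congr hT hT' hmn i]
      exact cellOf_mem_cand hT' hi him'
    -- equal gfun values force equal rows
    have hgi := congrFun hg i
    have hmem : i ∈ Finset.Icc 1 N \ Mset lam T := Finset.mem_sdiff.mpr ⟨hi, him⟩
    have hmem' : i ∈ Finset.Icc 1 N \ Mset lam T' := Finset.mem_sdiff.mpr ⟨hi, him'⟩
    rw [gfun, gfun, if_pos hmem, if_pos hmem', ← cand_congr hT hT' hmn i] at hgi
    set p := cellOf lam T i
    set p' := cellOf lam T' i
    have hrow : p.1 = p'.1 := by
      by_contra hne
      have key : ∀ a b : ℕ × ℕ, a ∈ cand lam (mn T) i → b ∈ cand lam (mn T) i →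
          a.1 < b.1 →
          ((cand lam (mn T) i).filter fun q => q.1 < a.1).card <
          ((cand lam (mn T) i).filter fun q => q.1 < b.1).card := by
        intro a b ha hb hab
        apply Finset.card_lt_card
        constructor
        · intro z hz
          obtain ⟨h1, h2⟩ := Finset.mem_filter.mp hz
          exact Finset.mem_filter.mpr ⟨h1, by omega⟩
        · intro hsub
          have := hsub (Finset.mem_filter.mpr ⟨ha, hab⟩)
          simp only [Finset.mem_filter] at this
          omega
      rcases Nat.lt_or_ge p.1 p'.1 with hlt | hge
      · exact absurd hgi (Nat.ne_of_lt (key p p' hc1 hc2 hlt))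
      · exact absurd hgi.symm (Nat.ne_of_lt (key p' p hc2 hc1 (by omega)))
    exact cand_rows_inj hY hT hc1 hc2 hrow

lemma svt_ext (hT : IsSVT lam N T) (hT' : IsSVT lam N T')
    (hcell : ∀ i ∈ Finset.Icc 1 N, cellOf lam T i = cellOf lam T' i) : T = T' := by
  funext p
  by_cases hp : p ∈ lam
  · ext i
    constructor
    · intro hi
      have hiI : i ∈ Finset.Icc 1 N := subset_Icc hT hp hi
      have h1 : cellOf lam T i = p := cellOf_eq hT hp hi
      have h2 : cellOf lam T' i = p := by rw [← hcell i hiI, h1]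
      have := (cellOf_mem hT' hiI).2
      rwa [h2] at this
    · intro hi
      have hiI : i ∈ Finset.Icc 1 N := subset_Icc hT' hp hi
      have h1 : cellOf lam T' i = p := cellOf_eq hT' hp hi
      have h2 : cellOf lam T i = p := by rw [hcell i hiI, h1]
      have := (cellOf_mem hT hiI).2
      rwa [h2] at this
  · rw [hT.support p hp, hT'.support p hp]

end SVTaux

namespace SVTaux

lemma ncard_prod' {α β : Type*} (s : Set α) (t : Set β) :
    (s ×ˢ t).ncard = s.ncard * t.ncard := by
  rw [← Nat.card_coe_set_eq, ← Nat.card_coe_set_eq, ← Nat.card_coe_set_eq,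
    ← Nat.card_prod]
  exact Nat.card_congr (Equiv.Set.prod s t)

lemma ncard_biUnion_le' {ι α : Type*} (I : Finset ι) (f : ι → Set α) :
    (⋃ i ∈ I, f i).ncard ≤ ∑ i ∈ I, (f i).ncard := by
  classical
  induction I using Finset.induction with
  | empty => simp
  | insert a s h ih =>
      rw [Finset.sum_insert h]
      refine le_trans ?_ (Nat.add_le_add_left ih _)
      rw [Finset.set_biUnion_insert]
      exact Set.ncard_union_le _ _

variable (lam : Finset (ℕ × ℕ)) (N : ℕ)

noncomputable def Phi (T : ℕ × ℕ → Finset ℕ) : (ℕ × ℕ → ℕ) × Finset ℕ × (ℕ → ℕ) :=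
  (rnk lam T, (Finset.Icc 1 N \ Mset lam T, gfun lam N T))

def GEset (E : Finset ℕ) : Set (ℕ → ℕ) :=
  {g | (∀ i ∈ E, g i < sv lam) ∧ ∀ i ∉ E, g i = 0}

def Uset : Set (Finset ℕ × (ℕ → ℕ)) :=
  ⋃ E ∈ Finset.powersetCard (N - lam.card) (Finset.Icc 2 N),
    ({E} : Set (Finset ℕ)) ×ˢ GEset lam E

lemma GEset_injOn (E : Finset ℕ) :
    Set.InjOn (fun g (x : ↥E) => g ↑x) (GEset lam E) := by
  intro g hg g' hg' h
  funext i
  by_cases hi : i ∈ E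
  · exact congrFun h ⟨i, hi⟩
  · rw [hg.2 i hi, hg'.2 i hi]

lemma GEset_finite (E : Finset ℕ) : (GEset lam E).Finite := by
  classical
  have h1 : (fun g (x : ↥E) => g ↑x) '' GEset lam E ⊆
      Set.pi Set.univ (fun _ : ↥E => Set.Iio (sv lam)) := by
    rintro _ ⟨g, hg, rfl⟩ x _
    exact hg.1 ↑x x.2
  exact Set.Finite.of_finite_image
    ((Set.Finite.pi fun _ => Set.finite_Iio _).subset h1) (GEset_injOn lam E)

lemma GEset_ncard (E : Finset ℕ) : (GEset lam E).ncard ≤ sv lam ^ E.card := by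
  classical
  have h : (GEset lam E).ncard ≤
      (↑(E.pi fun _ => Finset.range (sv lam)) : Set ((i : ℕ) → i ∈ E → ℕ)).ncard := by
    refine Set.ncard_le_ncard_of_injOn (fun g i _ => g i) ?_ ?_ (Finset.finite_toSet _)
    · intro g hg
      exact Finset.mem_coe.mpr (Finset.mem_pi.mpr fun i hi =>
        Finset.mem_range.mpr (hg.1 i hi))
    · intro g hg g' hg' hfe
      funext i
      by_cases hi : i ∈ E
      · exact congrFun (congrFun hfe i) hi
      · rw [hg.2 i hi, hg'.2 i hi]
  rw [Set.ncard_coe_finset, Finset.card_pi] at h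
  simpa [Finset.prod_const, Finset.card_range] using h

lemma isSYT_finite : {F : ℕ × ℕ → ℕ | IsSYT lam F}.Finite := by
  classical
  have h1 : (fun F (x : ↥lam) => F ↑x) '' {F : ℕ × ℕ → ℕ | IsSYT lam F} ⊆
      Set.pi Set.univ (fun _ : ↥lam => Set.Iic lam.card) := by
    rintro _ ⟨F, hF, rfl⟩ x _
    exact (Finset.mem_Icc.mp (hF.mem_range ↑x x.2)).2
  apply Set.Finite.of_finite_image
    ((Set.Finite.pi fun _ => Set.finite_Iic _).subset h1)
  intro F hF F' hF' h
  funext p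
  by_cases hp : p ∈ lam
  · exact congrFun h ⟨p, hp⟩
  · rw [hF.support p hp, hF'.support p hp]

lemma Uset_finite : (Uset lam N).Finite :=
  Set.Finite.biUnion (Finset.finite_toSet _)
    (fun E _ => (Set.finite_singleton E).prod (GEset_finite lam E))

lemma Uset_ncard (hc1 : 1 ≤ lam.card) (hcN : lam.card ≤ N) :
    (Uset lam N).ncard ≤ Nat.choose (N - 1) (lam.card - 1) * sv lam ^ (N - lam.card) := by
  classical
  refine le_trans (ncard_biUnion_le' _ _) ?_
  have h2 : ∀ E ∈ Finset.powersetCard (N - lam.card) (Finset.Icc 2 N),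
      (({E} : Set (Finset ℕ)) ×ˢ GEset lam E).ncard ≤ sv lam ^ (N - lam.card) := by
    intro E hE
    rw [ncard_prod', Set.ncard_singleton, one_mul]
    have h := GEset_ncard lam E
    rwa [(Finset.mem_powersetCard.mp hE).2] at h
  refine le_trans (Finset.sum_le_sum h2) ?_
  rw [Finset.sum_const, smul_eq_mul, Finset.card_powersetCard, Nat.card_Icc]
  have he : N + 1 - 2 = N - 1 := by omega
  have he2 : N - lam.card = (N - 1) - (lam.card - 1) := by omega
  rw [he, he2, Nat.choose_symm (by omega)]

end SVTaux


open SVTaux in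
/-- For nonempty `λ` and `N ≥ |λ|`,
`f^{λ,N} ≤ f^λ · C(N−1, |λ|−1) · sv(λ)^{N−|λ|}`. -/
theorem fSVT_upper_bound (lam : Finset (ℕ × ℕ)) (hY : IsYoung lam)
    (hne : lam.Nonempty) (N : ℕ) (hN : lam.card ≤ N) :
    fSVTall lam N ≤
      fSYT lam * Nat.choose (N - 1) (lam.card - 1) * (sv lam) ^ (N - lam.card) := by
  classical
  have hc1 : 1 ≤ lam.card := Finset.card_pos.mpr hne
  have hN1 : 1 ≤ N := le_trans hc1 hN
  have hTfin : (({F : ℕ × ℕ → ℕ | IsSYT lam F}) ×ˢ Uset lam N).Finite :=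
    (isSYT_finite lam).prod (Uset_finite lam N)
  have hle : fSVTall lam N ≤
      (({F : ℕ × ℕ → ℕ | IsSYT lam F}) ×ˢ Uset lam N).ncard := by
    refine Set.ncard_le_ncard_of_injOn (Phi lam N) ?_ ?_ hTfin
    · intro T hT
      simp only [Set.mem_setOf_eq] at hT
      refine Set.mem_prod.mpr ⟨rnk_isSYT hY hT, ?_⟩
      refine Set.mem_iUnion₂.mpr ⟨Finset.Icc 1 N \ Mset lam T, ?_, ?_⟩
      · refine Finset.mem_powersetCard.mpr ⟨?_, ?_⟩
        · intro i hi
          obtain ⟨hiI, hiM⟩ := Finset.mem_sdiff.mp hi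
          have h1 : 1 ∈ Mset lam T := one_mem_Mset hT hN1
          have hne1 : i ≠ 1 := fun h => hiM (h ▸ h1)
          rw [Finset.mem_Icc] at hiI ⊢
          omega
        · rw [Finset.card_sdiff_of_subset (Mset_subset hT), Nat.card_Icc, card_Mset hT]
          omega
      · refine Set.mem_prod.mpr ⟨rfl, fun i hi => gfun_lt_sv hY hT hi, ?_⟩
        intro i hi
        show gfun lam N T i = 0
        rw [gfun, if_neg hi]
    · intro T hT T' hT' h
      simp only [Set.mem_setOf_eq] at hT hT'
      have hr : rnk lam T = rnk lam T' := congrArg Prod.fst h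
      have hE : Finset.Icc 1 N \ Mset lam T = Finset.Icc 1 N \ Mset lam T' :=
        congrArg (fun x => x.2.1) h
      have hg : gfun lam N T = gfun lam N T' := congrArg (fun x => x.2.2) h
      have hM : Mset lam T = Mset lam T' := by
        rw [← Finset.sdiff_sdiff_eq_self (Mset_subset hT),
          ← Finset.sdiff_sdiff_eq_self (Mset_subset hT'), hE]
      exact svt_ext hT hT' (cellOf_congr hY hT hT' hM hr hg)
  calc fSVTall lam N ≤ _ := hle
    _ = fSYT lam * (Uset lam N).ncard := by rw [ncard_prod']; rfl
    _ ≤ fSYT lam * (Nat.choose (N - 1) (lam.card - 1) * sv lam ^ (N - lam.card)) :=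
        Nat.mul_le_mul_left _ (Uset_ncard lam N hc1 hN)
    _ = _ := by ring
end

section
/- Let λ be a nonempty Young diagram, N ≥ |λ|, 0 ≤ k < N, and let S be an N⟨k⟩-standard set-valued pre-tableau of shape λ. Then f^{λ,N,S} ≥ f^{λ∖S} · C(k, |λ∖S|), where λ∖S = {(r,c) ∈ λ : S(r,c) = ∅}, f^{λ∖S} is the number of standard Young tableaux of shape λ∖S (with f^∅ = 1), and C(a,b) denotes the binomial coefficient. -/
open Finset

namespace SVTaux

/-- The number of elements of `A` less than `i`. -/
def rk (A : Finset ℕ) (i : ℕ) : ℕ := (A.filter (· < i)).card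

lemma rk_mono (A : Finset ℕ) {i j : ℕ} (h : i ≤ j) : rk A i ≤ rk A j :=
  Finset.card_le_card (Finset.monotone_filter_right _ (fun a _ ha => lt_of_lt_of_le ha h))

lemma lt_of_rk_lt {A : Finset ℕ} {i j : ℕ} (h : rk A i < rk A j) : i < j := by
  by_contra hc
  push_neg at hc
  exact absurd (rk_mono A hc) (by omega)

lemma rk_le_card (A : Finset ℕ) (i : ℕ) : rk A i ≤ A.card :=
  Finset.card_le_card (Finset.filter_subset _ _)

lemma rk_lt_of_mem {A : Finset ℕ} {a : ℕ} (ha : a ∈ A) : rk A a < A.card := by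
  have hsub : A.filter (· < a) ⊆ A.erase a := by
    intro x hx
    rw [Finset.mem_filter] at hx
    exact Finset.mem_erase.mpr ⟨by omega, hx.1⟩
  have h1 : rk A a ≤ (A.erase a).card := Finset.card_le_card hsub
  have h2 : (A.erase a).card = A.card - 1 := Finset.card_erase_of_mem ha
  have h3 : 0 < A.card := Finset.card_pos.mpr ⟨a, ha⟩
  omega

lemma rk_strict {A : Finset ℕ} {a b : ℕ} (ha : a ∈ A) (hab : a < b) :
    rk A a < rk A b := by
  apply Finset.card_lt_card
  rw [Finset.ssubset_iff_of_subset
    (Finset.monotone_filter_right _ (fun x _ hx => lt_trans hx hab))]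
  exact ⟨a, Finset.mem_filter.mpr ⟨ha, hab⟩, by simp⟩

lemma rk_succ_of_not_mem {A : Finset ℕ} {a : ℕ} (h : a ∉ A) : rk A (a + 1) = rk A a := by
  unfold rk
  congr 1
  ext x
  simp only [Finset.mem_filter]
  constructor
  · rintro ⟨hx, hlt⟩
    have : x ≠ a := fun he => h (he ▸ hx)
    exact ⟨hx, by omega⟩
  · rintro ⟨hx, hlt⟩
    exact ⟨hx, by omega⟩

/-- The `j`-th block of values determined by `A`. -/
def blk (A : Finset ℕ) (k j : ℕ) : Finset ℕ :=
  (Finset.Icc 1 k).filter (fun i => rk A i + 1 = j)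

/-- The values above all of `A`. -/
def dump (A : Finset ℕ) (k m : ℕ) : Finset ℕ :=
  (Finset.Icc 1 k).filter (fun i => m ≤ rk A i)

lemma rk_image {A : Finset ℕ} {k : ℕ} (hA : A ⊆ Finset.Icc 1 k) :
    A.image (rk A) = Finset.range A.card := by
  apply Finset.eq_of_subset_of_card_le
  · intro x hx
    rw [Finset.mem_image] at hx
    obtain ⟨a, ha, rfl⟩ := hx
    exact Finset.mem_range.mpr (rk_lt_of_mem ha)
  · rw [Finset.card_range]
    rw [Finset.card_image_of_injOn]
    intro a ha b hb hab
    by_contra hne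
    rcases lt_or_gt_of_ne hne with h | h
    · exact absurd hab (Nat.ne_of_lt (rk_strict ha h))
    · exact absurd hab.symm (Nat.ne_of_lt (rk_strict hb h))

lemma blk_nonempty {A : Finset ℕ} {k j : ℕ} (hA : A ⊆ Finset.Icc 1 k)
    (hj1 : 1 ≤ j) (hjm : j ≤ A.card) : (blk A k j).Nonempty := by
  have : j - 1 ∈ Finset.range A.card := Finset.mem_range.mpr (by omega)
  rw [← rk_image hA, Finset.mem_image] at this
  obtain ⟨a, ha, hrk⟩ := this
  exact ⟨a, Finset.mem_filter.mpr ⟨hA ha, by omega⟩⟩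

lemma mem_A_of_max_blk {A : Finset ℕ} {k j : ℕ} (hA : A ⊆ Finset.Icc 1 k)
    (hj1 : 1 ≤ j) (hjm : j ≤ A.card) : maxv (blk A k j) ∈ A := by
  obtain ⟨M, hM, hsup⟩ := Finset.exists_mem_eq_sup _ (blk_nonempty hA hj1 hjm) id
  have hmaxv : maxv (blk A k j) = M := hsup
  rw [hmaxv]
  simp only [blk, Finset.mem_filter, Finset.mem_Icc] at hM
  obtain ⟨⟨hM1, hMk⟩, hMrk⟩ := hM
  by_contra hMA
  -- M ≠ k, since otherwise rk A k = A.card ≥ j, contradiction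
  have hMk' : M < k := by
    rcases lt_or_eq_of_le hMk with h | h
    · exact h
    · exfalso
      have : A.filter (· < M) = A := by
        apply Finset.filter_true_of_mem
        intro a ha
        have h1 := Finset.mem_Icc.mp (hA ha)
        have h2 : a ≠ M := fun he => hMA (he ▸ ha)
        omega
      have : rk A M = A.card := by rw [rk, this]
      omega
  have hM1blk : M + 1 ∈ blk A k j := by
    simp only [blk, Finset.mem_filter, Finset.mem_Icc]
    exact ⟨⟨by omega, by omega⟩, by rw [rk_succ_of_not_mem hMA]; omega⟩
  have h5 := Finset.le_sup (f := id) hM1blk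
  rw [hsup] at h5
  simp only [id] at h5
  omega

lemma max_blk_of_mem {A : Finset ℕ} {k : ℕ} {a : ℕ} (hA : A ⊆ Finset.Icc 1 k)
    (ha : a ∈ A) : maxv (blk A k (rk A a + 1)) = a := by
  have hablk : a ∈ blk A k (rk A a + 1) := Finset.mem_filter.mpr ⟨hA ha, rfl⟩
  apply le_antisymm
  · apply Finset.sup_le
    intro b hb
    simp only [blk, Finset.mem_filter] at hb
    by_contra hba
    simp only [id] at hba
    push_neg at hba
    have : rk A a < rk A b := rk_strict ha hba
    omega
  · exact Finset.le_sup (f := id) hablk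


lemma mem_blk {A : Finset ℕ} {k j i : ℕ} :
    i ∈ blk A k j ↔ (1 ≤ i ∧ i ≤ k) ∧ rk A i + 1 = j := by
  simp [blk, Finset.mem_filter, Finset.mem_Icc]

lemma mem_dump {A : Finset ℕ} {k m i : ℕ} :
    i ∈ dump A k m ↔ (1 ≤ i ∧ i ≤ k) ∧ m ≤ rk A i := by
  simp [dump, Finset.mem_filter, Finset.mem_Icc]

/-- The set-valued tableau built from an SYT `F` of `μ` and a subset `A`. -/
def tab (S : ℕ × ℕ → Finset ℕ) (μ : Finset (ℕ × ℕ)) (q : ℕ × ℕ) (k m : ℕ)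
    (F : ℕ × ℕ → ℕ) (A : Finset ℕ) (p : ℕ × ℕ) : Finset ℕ :=
  S p ∪ (if p ∈ μ then blk A k (F p) else if p = q then dump A k m else ∅)

lemma mem_tab_iff {S : ℕ × ℕ → Finset ℕ} {μ : Finset (ℕ × ℕ)} {q : ℕ × ℕ} {k m : ℕ}
    {F : ℕ × ℕ → ℕ} {A : Finset ℕ} {p : ℕ × ℕ} {i : ℕ} :
    i ∈ tab S μ q k m F A p ↔
      i ∈ S p ∨ (p ∈ μ ∧ i ∈ blk A k (F p)) ∨ (p ∉ μ ∧ p = q ∧ i ∈ dump A k m) := by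
  unfold tab
  split_ifs with h1 h2 <;> simp_all

lemma A_eq_image {μ : Finset (ℕ × ℕ)} {F : ℕ × ℕ → ℕ} {A : Finset ℕ} {k : ℕ}
    (hF : IsSYT μ F) (hA : A ⊆ Finset.Icc 1 k) (hAcard : A.card = μ.card) :
    A = μ.image (fun p => maxv (blk A k (F p))) := by
  apply Finset.Subset.antisymm
  · intro a ha
    have hrka : rk A a < A.card := rk_lt_of_mem ha
    obtain ⟨p, ⟨hpμ, hFp⟩, -⟩ := hF.exactlyOnce (rk A a + 1)
      (Finset.mem_Icc.mpr ⟨by omega, by omega⟩)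
    refine Finset.mem_image.mpr ⟨p, hpμ, ?_⟩
    rw [hFp, max_blk_of_mem hA ha]
  · intro x hx
    obtain ⟨p, hpμ, rfl⟩ := Finset.mem_image.mp hx
    have hFp := Finset.mem_Icc.mp (hF.mem_range p hpμ)
    exact mem_A_of_max_blk hA hFp.1 (by omega)

lemma tab_inj {S : ℕ × ℕ → Finset ℕ} {μ : Finset (ℕ × ℕ)} {q : ℕ × ℕ} {k : ℕ}
    {F F' : ℕ × ℕ → ℕ} {A A' : Finset ℕ}
    (hSemp : ∀ p ∈ μ, S p = ∅)
    (hF : IsSYT μ F) (hF' : IsSYT μ F')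
    (hA : A ⊆ Finset.Icc 1 k) (hAcard : A.card = μ.card)
    (hA' : A' ⊆ Finset.Icc 1 k) (hA'card : A'.card = μ.card)
    (h : tab S μ q k μ.card F A = tab S μ q k μ.card F' A') :
    F = F' ∧ A = A' := by
  have hT : ∀ p ∈ μ, blk A k (F p) = blk A' k (F' p) := by
    intro p hp
    have h2 := congrFun h p
    unfold tab at h2
    rw [hSemp p hp] at h2
    simpa [hp] using h2
  have hA_eq : A = A' := by
    rw [A_eq_image hF hA hAcard, A_eq_image hF' hA' hA'card]
    apply Finset.image_congr
    intro p hp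
    dsimp only
    rw [hT p hp]
  refine ⟨?_, hA_eq⟩
  funext p
  by_cases hp : p ∈ μ
  · have hFp := Finset.mem_Icc.mp (hF.mem_range p hp)
    obtain ⟨i, hi⟩ := blk_nonempty hA hFp.1 (by omega)
    have hi' : i ∈ blk A' k (F' p) := by rw [← hT p hp]; exact hi
    rw [mem_blk] at hi hi'
    rw [← hA_eq] at hi'
    omega
  · rw [hF.support p hp, hF'.support p hp]

lemma tab_mem_SVT (lam : Finset (ℕ × ℕ)) (N k : ℕ) (S : ℕ × ℕ → Finset ℕ)
    (hS : IsPreSVT lam N k S) (hk : k < N)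
    (q : ℕ × ℕ) (hqlam : q ∈ lam) (hqk1 : k + 1 ∈ S q)
    (μ : Finset (ℕ × ℕ)) (hμdef : μ = lam.filter (fun p => S p = ∅))
    (F : ℕ × ℕ → ℕ) (A : Finset ℕ)
    (hF : IsSYT μ F) (hA : A ⊆ Finset.Icc 1 k) (hAcard : A.card = μ.card) :
    tab S μ q k μ.card F A ∈ SVTset lam N S := by
  have hμsub : μ ⊆ lam := hμdef ▸ Finset.filter_subset _ _
  have hSemp : ∀ p ∈ μ, S p = ∅ := by
    intro p hp; rw [hμdef] at hp; exact (Finset.mem_filter.mp hp).2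
  have hSne : ∀ p ∈ lam, p ∉ μ → (S p).Nonempty := by
    intro p hp hpμ
    rw [Finset.nonempty_iff_ne_empty]
    intro h
    exact hpμ (hμdef ▸ Finset.mem_filter.mpr ⟨hp, h⟩)
  have hqμ : q ∉ μ := by
    intro h
    rw [hSemp q h] at hqk1
    exact absurd hqk1 (Finset.notMem_empty _)
  -- every cell of `lam` gets a nonempty set
  have hne_all : ∀ p ∈ lam, (tab S μ q k μ.card F A p).Nonempty := by
    intro p hp
    by_cases hpμ : p ∈ μ
    · have hFp := Finset.mem_Icc.mp (hF.mem_range p hpμ)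
      obtain ⟨i, hi⟩ := blk_nonempty hA hFp.1 (by omega)
      exact ⟨i, mem_tab_iff.mpr (Or.inr (Or.inl ⟨hpμ, hi⟩))⟩
    · obtain ⟨s, hs⟩ := hSne p hp hpμ
      exact ⟨s, mem_tab_iff.mpr (Or.inl hs)⟩
  -- the key ordering fact
  have key : ∀ p p' : ℕ × ℕ, p ∈ lam → p' ∈ lam →
      ((S p).Nonempty → (S p').Nonempty) →
      (p ∈ μ → p' ∈ μ → F p < F p') →
      (∀ a ∈ S p, ∀ b ∈ S p', a < b) →
      ∀ a ∈ tab S μ q k μ.card F A p, ∀ b ∈ tab S μ q k μ.card F A p', a < b := by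
    intro p p' hp hp' hprop horder hSord a ha b hb
    rw [mem_tab_iff] at ha hb
    by_cases hpμ : p ∈ μ
    · have ha' : (1 ≤ a ∧ a ≤ k) ∧ rk A a + 1 = F p := by
        rcases ha with h | h | h
        · rw [hSemp p hpμ] at h; exact absurd h (Finset.notMem_empty a)
        · exact mem_blk.mp h.2
        · exact absurd hpμ h.1
      have hFp := Finset.mem_Icc.mp (hF.mem_range p hpμ)
      rcases hb with hbS | ⟨hp'μ, hbB⟩ | ⟨hp'nμ, hpq', hbD⟩
      · have := Finset.mem_Icc.mp (hS.subset p' hp' hbS)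
        omega
      · rw [mem_blk] at hbB
        have hlt : F p < F p' := horder hpμ hp'μ
        exact lt_of_rk_lt (A := A) (by omega)
      · rw [mem_dump] at hbD
        exact lt_of_rk_lt (A := A) (by omega)
    · have hSp : (S p).Nonempty := hSne p hp hpμ
      have hp'μ : p' ∉ μ := by
        intro hmem
        have h2 := hprop hSp
        rw [hSemp p' hmem] at h2
        exact absurd h2 (by simp)
      rcases hb with hbS | ⟨hmem, _⟩ | ⟨_, hpq', hbD⟩
      · rcases ha with haS | ⟨hmem, _⟩ | ⟨_, hpq, haD⟩
        · exact hSord a haS b hbS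
        · exact absurd hmem hpμ
        · rw [mem_dump] at haD
          have := Finset.mem_Icc.mp (hS.subset p' hp' hbS)
          omega
      · exact absurd hmem hp'μ
      · exfalso
        obtain ⟨s, hs⟩ := hSp
        have h1 := hSord s hs (k + 1) (by rw [hpq']; exact hqk1)
        have h2 := Finset.mem_Icc.mp (hS.subset p hp hs)
        omega
  refine ⟨⟨?_, ?_, ?_, ?_, ?_, ?_, ?_, ?_⟩, fun p => Finset.subset_union_left⟩
  · -- support
    intro p hp
    have h1 : p ∉ μ := fun h => hp (hμsub h)
    have h2 : p ≠ q := fun h => hp (h ▸ hqlam)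
    unfold tab
    rw [hS.support p hp]
    simp [h1, h2]
  · -- subset
    intro p hp i hi
    rw [mem_tab_iff] at hi
    rw [Finset.mem_Icc]
    rcases hi with h | ⟨_, h⟩ | ⟨_, _, h⟩
    · have := Finset.mem_Icc.mp (hS.subset p hp h); omega
    · rw [mem_blk] at h; omega
    · rw [mem_dump] at h; omega
  · -- exactlyOnce
    intro i hi
    rw [Finset.mem_Icc] at hi
    by_cases hik : i ≤ k
    · by_cases hrm : rk A i < μ.card
      · obtain ⟨p, ⟨hpμ, hFp⟩, huniq⟩ := hF.exactlyOnce (rk A i + 1)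
          (Finset.mem_Icc.mpr ⟨by omega, by omega⟩)
        refine ⟨p, ⟨hμsub hpμ, mem_tab_iff.mpr (Or.inr (Or.inl
          ⟨hpμ, mem_blk.mpr ⟨⟨by omega, hik⟩, by omega⟩⟩))⟩, ?_⟩
        rintro p' ⟨hp'lam, hp'i⟩
        rw [mem_tab_iff] at hp'i
        rcases hp'i with h | ⟨hp'μ, hb⟩ | ⟨_, _, hd⟩
        · have := Finset.mem_Icc.mp (hS.subset p' hp'lam h); omega
        · rw [mem_blk] at hb
          exact huniq p' ⟨hp'μ, by omega⟩
        · rw [mem_dump] at hd; omega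
      · refine ⟨q, ⟨hqlam, mem_tab_iff.mpr (Or.inr (Or.inr
          ⟨hqμ, rfl, mem_dump.mpr ⟨⟨by omega, hik⟩, by omega⟩⟩))⟩, ?_⟩
        rintro p' ⟨hp'lam, hp'i⟩
        rw [mem_tab_iff] at hp'i
        rcases hp'i with h | ⟨hp'μ, hb⟩ | ⟨_, hpq, _⟩
        · have := Finset.mem_Icc.mp (hS.subset p' hp'lam h); omega
        · rw [mem_blk] at hb
          have := Finset.mem_Icc.mp (hF.mem_range p' hp'μ)
          omega
        · exact hpq
    · obtain ⟨p, ⟨hplam, hpi⟩, huniq⟩ := hS.exactlyOnce i (Finset.mem_Icc.mpr ⟨by omega, hi.2⟩)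
      refine ⟨p, ⟨hplam, mem_tab_iff.mpr (Or.inl hpi)⟩, ?_⟩
      rintro p' ⟨hp'lam, hp'i⟩
      rw [mem_tab_iff] at hp'i
      rcases hp'i with h | ⟨_, hb⟩ | ⟨_, _, hd⟩
      · exact huniq p' ⟨hp'lam, h⟩
      · rw [mem_blk] at hb; omega
      · rw [mem_dump] at hd; omega
  · -- down_ne
    intro r c _ h2 _
    exact hne_all _ h2
  · -- right_ne
    intro r c _ h2 _
    exact hne_all _ h2
  · -- down_lt
    intro r c h1 h2
    exact key (r, c) (r + 1, c) h1 h2 (hS.down_ne r c h1 h2)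
      (fun hm1 hm2 => hF.down_lt r c hm1 hm2) (hS.down_lt r c h1 h2)
  · -- right_lt
    intro r c h1 h2
    exact key (r, c) (r, c + 1) h1 h2 (hS.right_ne r c h1 h2)
      (fun hm1 hm2 => hF.right_lt r c hm1 hm2) (hS.right_lt r c h1 h2)
  · -- empties
    have h0 : lam.filter (fun p => tab S μ q k μ.card F A p = ∅) = ∅ := by
      apply Finset.filter_eq_empty_iff.mpr
      intro p hp
      exact (hne_all p hp).ne_empty
    rw [h0]
    simp

end SVTaux

open SVTaux in
/-- For nonempty `λ`, `N ≥ |λ|`, `0 ≤ k < N` and an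
`N⟨k⟩`-standard set-valued pre-tableau `S`,
`f^{λ,N,S} ≥ f^{λ∖S} · C(k, |λ∖S|)`. -/
theorem fSVT_pre_lower_bound (lam : Finset (ℕ × ℕ)) (hY : IsYoung lam)
    (hne : lam.Nonempty) (N k : ℕ) (hN : lam.card ≤ N) (hk : k < N)
    (S : ℕ × ℕ → Finset ℕ) (hS : IsPreSVT lam N k S) :
    fSYT (lam.filter (fun p => S p = ∅)) *
      Nat.choose k (lam.filter (fun p => S p = ∅)).card ≤ fSVT lam N S := by
  classical
  set μ : Finset (ℕ × ℕ) := lam.filter (fun p => S p = ∅) with hμdef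
  have hk1mem : k + 1 ∈ Finset.Icc (k + 1) N := Finset.mem_Icc.mpr ⟨le_refl _, by omega⟩
  obtain ⟨q, ⟨hqlam, hqk1⟩, -⟩ := hS.exactlyOnce (k + 1) hk1mem
  -- finiteness of the target set
  have hfin : (SVTset lam N S).Finite := by
    apply Set.Finite.of_finite_image (f := fun T => (fun p : {x // x ∈ lam} => T p.1))
    · apply Set.Finite.subset
        (Set.Finite.pi (t := fun _ : {x // x ∈ lam} => {s : Finset ℕ | s ⊆ Finset.Icc 1 N})
          (fun _ => Set.Finite.ofFinset (Finset.Icc 1 N).powerset (fun _ => Finset.mem_powerset)))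
      rintro g ⟨T, hT, rfl⟩
      rw [Set.mem_pi]
      intro p _
      exact hT.1.subset p.1 p.2
    · intro T hT T' hT' he
      funext p
      by_cases hp : p ∈ lam
      · exact congrFun he ⟨p, hp⟩
      · rw [hT.1.support p hp, hT'.1.support p hp]
  rcases Set.finite_or_infinite {F : ℕ × ℕ → ℕ | IsSYT μ F} with hSYTfin | hSYTinf
  · have hfSVT : fSVT lam N S = hfin.toFinset.card :=
      Set.ncard_eq_toFinset_card _ hfin
    have hfSYT : fSYT μ = hSYTfin.toFinset.card :=
      Set.ncard_eq_toFinset_card _ hSYTfin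
    have hPcard : (Finset.powersetCard μ.card (Finset.Icc 1 k)).card = Nat.choose k μ.card := by
      rw [Finset.card_powersetCard, Nat.card_Icc, Nat.add_sub_cancel]
    rw [hfSVT, hfSYT, ← hPcard, ← Finset.card_product]
    apply Finset.card_le_card_of_injOn
      (fun FA : (ℕ × ℕ → ℕ) × Finset ℕ => tab S μ q k μ.card FA.1 FA.2)
    · rintro ⟨F, A⟩ hFA
      rw [Finset.mem_coe, Finset.mem_product, Set.Finite.mem_toFinset, Finset.mem_powersetCard] at hFA
      rw [Finset.mem_coe, Set.Finite.mem_toFinset]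
      exact tab_mem_SVT lam N k S hS hk q hqlam hqk1 μ hμdef F A hFA.1 hFA.2.1 hFA.2.2
    · rintro ⟨F, A⟩ hFA ⟨F', A'⟩ hFA' he
      rw [Finset.mem_coe, Finset.mem_product, Set.Finite.mem_toFinset,
        Finset.mem_powersetCard] at hFA hFA'
      have hSemp : ∀ p ∈ μ, S p = ∅ := by
        intro p hp; rw [hμdef] at hp; exact (Finset.mem_filter.mp hp).2
      obtain ⟨h1, h2⟩ := tab_inj hSemp hFA.1 hFA'.1 hFA.2.1 hFA.2.2 hFA'.2.1 hFA'.2.2 he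
      exact Prod.ext h1 h2
  · have h0 : fSYT μ = 0 := hSYTinf.ncard
    rw [h0, zero_mul]
    exact Nat.zero_le _
end
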